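/- arXiv:1704.08294 — 6 statements merged into one kernel-verified Lean document; each statement's English description precedes it below -/
import Mathlib

section
/- (Santaló's formula on the Euclidean unit disc.) For every continuous (or integrable) function f on SM, ∫_{SM} f(x,θ) dx dθ = ∫_{−π/2}^{π/2} ∫₀^{2π} cos α · ( ∫₀^{2cos α} f( e^{iβ} + t e^{i(β+π+α)}, β+π+α ) dt ) dβ dα. -/
open MeasureTheory Set

noncomputable section

/-- The closed unit disc `M ⊆ ℂ`. -/
def Disc : Set ℂ := Metric.closedBall 0 1

/-- Lebesgue measure restricted to the disc. -/
def μDisc : Measure ℂ := volume.restrict Disc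

/-- The measure `dx dθ` on `SM = M × S¹` (the circle realized as `(0, 2π]`). -/
def μSM : Measure (ℂ × ℝ) := μDisc.prod (volume.restrict (Ioc 0 (2 * Real.pi)))

/-- The measure `dβ dα` on `∂₊SM`, in fan-beam coordinates `(β, α)`. -/
def μBd : Measure (ℝ × ℝ) :=
  (volume.restrict (Ioc 0 (2 * Real.pi))).prod
    (volume.restrict (Icc (-(Real.pi / 2)) (Real.pi / 2)))

/-- `e^{i n θ}`. -/
def ang (n : ℤ) (θ : ℝ) : ℂ := Complex.exp (Complex.I * n * θ)

/-- Point at parameter `t` along the chord entering the disc at `e^{iβ}` in direction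
`e^{i(β+π+α)}` (fan-beam coordinates). -/
def pt (β α t : ℝ) : ℂ :=
  Complex.exp (Complex.I * β) + t * Complex.exp (Complex.I * (β + Real.pi + α))

/-- Attenuated X-ray transform in fan-beam coordinates (pointwise integral formula). -/
def attXray (a : ℂ → ℂ) (f : ℂ → ℝ → ℂ) (β α : ℝ) : ℂ :=
  ∫ t in (0:ℝ)..(2 * Real.cos α),
    f (pt β α t) (β + Real.pi + α) *
      Complex.exp (∫ s in (0:ℝ)..t, a (pt β α s))

/-- Squared `L²(M)` norm. -/
def nM2 (u : ℂ → ℂ) : ℝ := ∫ z in Disc, ‖u z‖ ^ 2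

/-- Squared `L²(SM)` norm. -/
def nSM2 (f : ℂ → ℝ → ℂ) : ℝ :=
  ∫ z in Disc, ∫ θ in (0:ℝ)..(2 * Real.pi), ‖f z θ‖ ^ 2

/-- Squared `L²(∂₊SM)` norm. -/
def nBd2 (F : ℝ → ℝ → ℂ) : ℝ :=
  ∫ α in (-(Real.pi / 2))..(Real.pi / 2), ∫ β in (0:ℝ)..(2 * Real.pi), ‖F β α‖ ^ 2

/-- Smooth compactly supported test functions on `ℝ² ≅ ℂ`. -/
def IsTest (φ : ℂ → ℂ) : Prop := ContDiff ℝ (⊤ : ℕ∞) φ ∧ HasCompactSupport φ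

/-- `∂φ/∂x`. -/
def dX (φ : ℂ → ℂ) (z : ℂ) : ℂ := fderiv ℝ φ z 1

/-- `∂φ/∂y`. -/
def dY (φ : ℂ → ℂ) (z : ℂ) : ℂ := fderiv ℝ φ z Complex.I

/-- `u ∈ H¹₀(M)` with weak partial derivatives `ux, uy`: the zero-extension of `u`
to `ℝ²` has weak gradient `(ux, uy) ∈ L²`. -/
structure IsH10 (u ux uy : ℂ → ℂ) : Prop where
  memL2 : MemLp u 2 μDisc
  memL2x : MemLp ux 2 μDisc
  memL2y : MemLp uy 2 μDisc
  zeroOut : ∀ z ∉ Disc, u z = 0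
  zeroOutx : ∀ z ∉ Disc, ux z = 0
  zeroOuty : ∀ z ∉ Disc, uy z = 0
  weakX : ∀ φ : ℂ → ℂ, IsTest φ → ∫ z, u z * dX φ z = -∫ z, ux z * φ z
  weakY : ∀ φ : ℂ → ℂ, IsTest φ → ∫ z, u z * dY φ z = -∫ z, uy z * φ z

/-- Constants `C` for which the Poincaré inequality `‖u‖² ≤ C ‖∇u‖²` holds on `H¹₀(M)`;
the Poincaré constant `C_P` is the optimal (least) element of this set. -/
def PoincareSet : Set ℝ :=
  {C : ℝ | 0 ≤ C ∧ ∀ u ux uy : ℂ → ℂ, IsH10 u ux uy → nM2 u ≤ C * (nM2 ux + nM2 uy)}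

/-- `u ∈ L²(M)` with `∂̄u = 0` distributionally (complex-analytic). -/
def HoloL2 (u : ℂ → ℂ) : Prop :=
  MemLp u 2 μDisc ∧
    ∀ φ : ℂ → ℂ, IsTest φ → tsupport φ ⊆ Metric.ball 0 1 →
      ∫ z in Disc, u z * (dX φ z + Complex.I * dY φ z) = 0

/-- `u ∈ L²(M)` with `∂u = 0` distributionally (complex-antianalytic). -/
def AntiHoloL2 (u : ℂ → ℂ) : Prop :=
  MemLp u 2 μDisc ∧
    ∀ φ : ℂ → ℂ, IsTest φ → tsupport φ ⊆ Metric.ball 0 1 →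
      ∫ z in Disc, u z * (dX φ z - Complex.I * dY φ z) = 0

namespace Santalo
open Real

def W (α t : ℝ) : ℂ := ((t - Real.cos α : ℝ) : ℂ) + (Real.sin α : ℝ) * Complex.I

lemma continuous_W {X : Type*} [TopologicalSpace X] {a b : X → ℝ}
    (ha : Continuous a) (hb : Continuous b) :
    Continuous fun x => W (a x) (b x) := by
  unfold W
  exact (Complex.continuous_ofReal.comp (hb.sub (Real.continuous_cos.comp ha))).add
    ((Complex.continuous_ofReal.comp (Real.continuous_sin.comp ha)).mul continuous_const)

def S : Set (ℝ × ℝ) :=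
  {p | -(π / 2) < p.1 ∧ p.1 < π / 2 ∧ 0 < p.2 ∧ p.2 < 2 * Real.cos p.1}

lemma isOpen_S : IsOpen S := by
  have : S = ({p : ℝ × ℝ | -(π/2) < p.1} ∩ {p | p.1 < π/2} ∩ {p | 0 < p.2} ∩
      {p | p.2 < 2 * Real.cos p.1}) := by
    ext p; simp only [S, mem_setOf_eq, mem_inter_iff]; tauto
  rw [this]
  exact (((isOpen_lt continuous_const continuous_fst).inter
    (isOpen_lt continuous_fst continuous_const)).inter
    (isOpen_lt continuous_const continuous_snd)).inter
    (isOpen_lt continuous_snd (continuous_const.mul (Real.continuous_cos.comp continuous_fst)))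

lemma measurableSet_S : MeasurableSet S := isOpen_S.measurableSet

def Fm : ℝ × ℝ → ℝ × ℝ := fun p => (p.2 - Real.cos p.1, Real.sin p.1)

def Bm (p : ℝ × ℝ) : ℝ × ℝ →L[ℝ] ℝ × ℝ :=
  LinearMap.toContinuousLinearMap (Matrix.toLin (Module.Basis.finTwoProd ℝ) (Module.Basis.finTwoProd ℝ)
    !![Real.sin p.1, 1; Real.cos p.1, 0])

lemma hasFDerivAt_Fm (p : ℝ × ℝ) : HasFDerivAt Fm (Bm p) p := by
  unfold Fm Bm
  rw [Matrix.toLin_finTwoProd_toContinuousLinearMap]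
  convert HasFDerivAt.prodMk (𝕜 := ℝ)
    (hasFDerivAt_snd.sub ((Real.hasDerivAt_cos p.1).comp_hasFDerivAt p hasFDerivAt_fst))
    ((Real.hasDerivAt_sin p.1).comp_hasFDerivAt p hasFDerivAt_fst) using 2 <;>
  first | rfl | simp [neg_smul, sub_neg_eq_add, add_comm, one_smul, zero_smul]

lemma Bm_det (p : ℝ × ℝ) : (Bm p).det = -Real.cos p.1 := by
  simp only [Bm, ContinuousLinearMap.det, LinearMap.coe_toContinuousLinearMap,
    LinearMap.det_toLin, Matrix.det_fin_two_of]
  ring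

lemma injOn_Fm : InjOn Fm S := by
  rintro ⟨a, s⟩ ⟨ha1, ha2, _, _⟩ ⟨b, t⟩ ⟨hb1, hb2, _, _⟩ h
  simp only [Fm, Prod.mk.injEq] at h
  have hab : a = b := Real.injOn_sin ⟨ha1.le, ha2.le⟩ ⟨hb1.le, hb2.le⟩ h.2
  subst hab
  have : s = t := by have := h.1; linarith
  simp [this]

def T : Set (ℝ × ℝ) := {p | p.1 ^ 2 + p.2 ^ 2 < 1}

lemma Fm_image : Fm '' S = T := by
  ext ⟨x, y⟩
  constructor
  · rintro ⟨⟨a, s⟩, ⟨ha1, ha2, hs1, hs2⟩, h⟩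
    simp only [Fm, Prod.mk.injEq] at h
    obtain ⟨hx, hy⟩ := h
    have hca : 0 < Real.cos a := Real.cos_pos_of_mem_Ioo ⟨ha1, ha2⟩
    simp only [T, mem_setOf_eq, ← hx, ← hy]
    nlinarith [Real.sin_sq_add_cos_sq a]
  · intro h
    simp only [T, mem_setOf_eq] at h
    have hy1 : -1 < y := by nlinarith [sq_nonneg x, sq_nonneg (y+1)]
    have hy1' : y < 1 := by nlinarith [sq_nonneg x, sq_nonneg (y-1)]
    have hsin : Real.sin (Real.arcsin y) = y := Real.sin_arcsin hy1.le hy1'.le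
    have hcos : Real.cos (Real.arcsin y) = Real.sqrt (1 - y ^ 2) := Real.cos_arcsin y
    have hxlt : x ^ 2 < 1 - y ^ 2 := by nlinarith
    have hx' : |x| < Real.cos (Real.arcsin y) := by
      rw [hcos, ← Real.sqrt_sq_eq_abs]
      exact Real.sqrt_lt_sqrt (sq_nonneg x) hxlt
    have h1 := abs_lt.1 hx'
    refine ⟨(Real.arcsin y, x + Real.cos (Real.arcsin y)), ⟨?_, ?_, ?_, ?_⟩, ?_⟩
    · exact Real.neg_pi_div_two_lt_arcsin.mpr hy1
    · exact Real.arcsin_lt_pi_div_two.mpr hy1'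
    · show 0 < x + Real.cos (Real.arcsin y); linarith [h1.1]
    · show x + Real.cos (Real.arcsin y) < 2 * Real.cos (Real.arcsin y); linarith [h1.2]
    · simp only [Fm, Prod.mk.injEq]
      exact ⟨by ring, hsin⟩


def Disc : Set ℂ := Metric.closedBall 0 1

lemma W_eq (p : ℝ × ℝ) : Complex.measurableEquivRealProd.symm (Fm p) = W p.1 p.2 := by
  apply Complex.ext <;>
    simp [Fm, W, Complex.measurableEquivRealProd_symm_apply, Complex.cos_ofReal_re,
      Complex.sin_ofReal_re]

lemma discIntegral (g : ℂ → ℂ) (hg : Continuous g) :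
    ∫ z in Disc, g z =
      ∫ α in (-(π / 2))..(π / 2),
        (Real.cos α : ℂ) * ∫ t in (0:ℝ)..(2 * Real.cos α), g (W α t) := by
  have hball : ∫ z in Disc, g z = ∫ z in Metric.ball (0:ℂ) 1, g z := by
    apply setIntegral_congr_set
    simp only [Disc]
    refine (ae_eq_set.2 ⟨?_, ?_⟩)
    · rw [Metric.closedBall_diff_ball]
      exact Measure.addHaar_sphere volume 0 1
    · rw [diff_eq_empty.2 Metric.ball_subset_closedBall]
      exact measure_empty
  have hpre : (⇑Complex.measurableEquivRealProd.symm) ⁻¹' (Metric.ball (0:ℂ) 1) = T := by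
    ext p
    simp only [T, mem_preimage, Metric.mem_ball, dist_zero_right, mem_setOf_eq,
      Complex.measurableEquivRealProd_symm_apply]
    rw [Complex.norm_def, Complex.normSq_mk,
      show p.1 * p.1 + p.2 * p.2 = p.1 ^ 2 + p.2 ^ 2 by ring]
    constructor
    · intro hlt
      have := (Real.sqrt_lt' one_pos).1 hlt
      linarith
    · intro hlt
      exact (Real.sqrt_lt' one_pos).2 (by linarith)
  have step2 : ∫ z in Metric.ball (0:ℂ) 1, g z =
      ∫ p in T, g (Complex.measurableEquivRealProd.symm p) := by
    rw [← hpre]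
    exact ((Complex.volume_preserving_equiv_real_prod.symm
      Complex.measurableEquivRealProd).setIntegral_preimage_emb
      Complex.measurableEquivRealProd.symm.measurableEmbedding g _).symm
  have step3 : ∫ p in T, g (Complex.measurableEquivRealProd.symm p) =
      ∫ p in S, |(Bm p).det| • g (Complex.measurableEquivRealProd.symm (Fm p)) := by
    rw [← Fm_image]
    exact integral_image_eq_integral_abs_det_fderiv_smul volume measurableSet_S
      (fun p _ => (hasFDerivAt_Fm p).hasFDerivWithinAt) injOn_Fm _
  have step4 : ∫ p in S, |(Bm p).det| • g (Complex.measurableEquivRealProd.symm (Fm p)) =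
      ∫ p in S, Real.cos p.1 • g (W p.1 p.2) := by
    apply setIntegral_congr_fun measurableSet_S
    intro p hp
    show |(Bm p).det| • g (Complex.measurableEquivRealProd.symm (Fm p)) =
      Real.cos p.1 • g (W p.1 p.2)
    rw [W_eq, Bm_det, abs_neg, abs_of_pos (Real.cos_pos_of_mem_Ioo ⟨hp.1, hp.2.1⟩)]
  set G : ℝ × ℝ → ℂ := fun p => Real.cos p.1 • g (W p.1 p.2) with hGdef
  have hGcont : Continuous G :=
    (Real.continuous_cos.comp continuous_fst).smul
      (hg.comp (continuous_W continuous_fst continuous_snd))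
  have hSsub : S ⊆ Icc (-(π/2)) (π/2) ×ˢ Icc (0:ℝ) 2 := by
    rintro ⟨a, t⟩ ⟨h1, h2, h3, h4⟩
    exact ⟨⟨h1.le, h2.le⟩, ⟨h3.le, by nlinarith [Real.cos_le_one a]⟩⟩
  have hGint : IntegrableOn G S volume :=
    ((hGcont.continuousOn).integrableOn_compact (isCompact_Icc.prod isCompact_Icc)).mono_set hSsub
  have hInd : Integrable (S.indicator G) ((volume : Measure ℝ).prod volume) := by
    rw [← Measure.volume_eq_prod]
    exact (integrable_indicator_iff measurableSet_S).2 hGint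
  have step5 : ∫ p in S, G p = ∫ α : ℝ, ∫ t : ℝ, S.indicator G (α, t) := by
    rw [← integral_indicator measurableSet_S, Measure.volume_eq_prod, integral_prod _ hInd]
  have hsec : ∀ α : ℝ, (∫ t : ℝ, S.indicator G (α, t)) =
      (Ioo (-(π/2)) (π/2)).indicator
        (fun α => (Real.cos α : ℂ) * ∫ t in (0:ℝ)..(2*Real.cos α), g (W α t)) α := by
    intro α
    by_cases hα : α ∈ Ioo (-(π/2)) (π/2)
    · have hcos : 0 < Real.cos α := Real.cos_pos_of_mem_Ioo hα
      have hfun : (fun t => S.indicator G (α, t)) =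
          (Ioo (0:ℝ) (2*Real.cos α)).indicator (fun t => Real.cos α • g (W α t)) := by
        funext t
        by_cases ht : t ∈ Ioo (0:ℝ) (2*Real.cos α)
        · rw [indicator_of_mem ht,
            indicator_of_mem (show (α, t) ∈ S from ⟨hα.1, hα.2, ht.1, ht.2⟩)]
        · rw [indicator_of_notMem ht,
            indicator_of_notMem (show (α, t) ∉ S from fun hc => ht ⟨hc.2.2.1, hc.2.2.2⟩)]
      rw [hfun, integral_indicator measurableSet_Ioo, ← integral_Ioc_eq_integral_Ioo,
        ← intervalIntegral.integral_of_le (by linarith : (0:ℝ) ≤ 2*Real.cos α),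
        intervalIntegral.integral_smul, indicator_of_mem hα, Complex.real_smul]
    · rw [indicator_of_notMem hα]
      have hz : ∀ t : ℝ, S.indicator G (α, t) = 0 := fun t =>
        indicator_of_notMem (fun hc => hα ⟨hc.1, hc.2.1⟩) _
      simp only [hz, integral_zero]
  rw [hball, step2, step3, step4, step5]
  rw [integral_congr_ae (Filter.Eventually.of_forall hsec),
    integral_indicator measurableSet_Ioo, ← integral_Ioc_eq_integral_Ioo,
    ← intervalIntegral.integral_of_le (by linarith [Real.pi_pos] : -(π/2) ≤ π/2)]


lemma rot (g : ℂ → ℂ) (c : ℝ) :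
    ∫ z in Disc, g z = ∫ w in Disc, g (Complex.exp (Complex.I * c) * w) := by
  have h1 : MeasurePreserving (⇑(rotation (Circle.exp c))) volume volume :=
    (rotation (Circle.exp c)).measurePreserving
  have hemb : MeasurableEmbedding (⇑(rotation (Circle.exp c))) :=
    (rotation (Circle.exp c)).toHomeomorph.measurableEmbedding
  have hpre : (⇑(rotation (Circle.exp c))) ⁻¹' Disc = Disc := by
    ext z
    simp only [mem_preimage, Disc, Metric.mem_closedBall, dist_zero_right,
      LinearIsometryEquiv.norm_map]
  have h2 := h1.setIntegral_preimage_emb hemb g Disc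
  rw [hpre] at h2
  rw [← h2]
  have h3 : ∀ w : ℂ, g ((rotation (Circle.exp c)) w) = g (Complex.exp (Complex.I * c) * w) := by
    intro w
    rw [rotation_apply, Circle.coe_exp, mul_comm (c:ℂ) Complex.I]
  simp_rw [h3]

lemma pt_eq (β α t : ℝ) :
    pt β α t = Complex.exp (Complex.I * ((β + Real.pi + α : ℝ) : ℂ)) * W α t := by
  unfold pt W
  push_cast
  rw [← Complex.ofReal_cos, ← Complex.ofReal_sin]
  have h1 : Complex.exp (Complex.I * ((β : ℂ) + (Real.pi : ℂ) + (α : ℂ))) =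
      Complex.exp (Complex.I * β) * Complex.exp (Complex.I * Real.pi) *
        Complex.exp (Complex.I * α) := by
    rw [← Complex.exp_add, ← Complex.exp_add]
    congr 1
    ring
  have h2 : Complex.exp (Complex.I * Real.pi) = -1 := by
    rw [mul_comm]; exact Complex.exp_pi_mul_I
  have h3 : Complex.exp (Complex.I * α) =
      (Real.cos α : ℂ) + (Real.sin α : ℂ) * Complex.I := by
    rw [mul_comm, Complex.exp_mul_I, Complex.ofReal_cos, Complex.ofReal_sin]
  have hcs : (Real.cos α : ℂ) ^ 2 + (Real.sin α : ℂ) ^ 2 = 1 := by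
    exact_mod_cast congrArg (Complex.ofReal) (Real.cos_sq_add_sin_sq α)
  rw [h1, h2, h3]
  linear_combination (-(Complex.exp (Complex.I * β))) * hcs +
    (Complex.exp (Complex.I * β) * (Real.sin α : ℂ) ^ 2) * Complex.I_sq

lemma exp_per (θ : ℝ) :
    Complex.exp (Complex.I * ((θ + 2 * Real.pi : ℝ) : ℂ)) = Complex.exp (Complex.I * θ) := by
  have h : Complex.I * ((θ + 2 * Real.pi : ℝ) : ℂ) =
      Complex.I * θ + 2 * Real.pi * Complex.I := by push_cast; ring
  rw [h, Complex.exp_add, Complex.exp_two_pi_mul_I, mul_one]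

def Phi (f : ℂ → ℝ → ℂ) (θ α : ℝ) : ℂ :=
  (Real.cos α : ℂ) * ∫ t in (0:ℝ)..(2 * Real.cos α), f (Complex.exp (Complex.I * θ) * W α t) θ

lemma phi_cont (f : ℂ → ℝ → ℂ) (hf : Continuous (Function.uncurry f)) :
    Continuous fun p : ℝ × ℝ => Phi f p.1 p.2 := by
  unfold Phi
  apply Continuous.mul
  · exact Complex.continuous_ofReal.comp (Real.continuous_cos.comp continuous_snd)
  · apply intervalIntegral.continuous_parametric_intervalIntegral_of_continuous
      (μ := volume) ?_ ?_
    · show Continuous fun q : (ℝ × ℝ) × ℝ =>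
        f (Complex.exp (Complex.I * q.1.1) * W q.1.2 q.2) q.1.1
      show Continuous ((Function.uncurry f) ∘ fun q : (ℝ × ℝ) × ℝ =>
        (Complex.exp (Complex.I * q.1.1) * W q.1.2 q.2, q.1.1))
      apply hf.comp
      apply Continuous.prodMk
      · apply Continuous.mul
        · exact Complex.continuous_exp.comp (continuous_const.mul
            (Complex.continuous_ofReal.comp (continuous_fst.comp continuous_fst)))
        · exact continuous_W (continuous_snd.comp continuous_fst) continuous_snd
      · exact continuous_fst.comp continuous_fst
    · exact continuous_const.mul (Real.continuous_cos.comp continuous_snd)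

lemma phi_periodic (f : ℂ → ℝ → ℂ) (hper : ∀ z θ, f z (θ + 2 * Real.pi) = f z θ) (α : ℝ) :
    Function.Periodic (fun θ => Phi f θ α) (2 * Real.pi) := by
  intro θ
  unfold Phi
  simp only [exp_per, hper]

lemma swap_II {a b c d : ℝ} (hab : a ≤ b) (hcd : c ≤ d) (H : ℝ → ℝ → ℂ)
    (hH : Continuous fun p : ℝ × ℝ => H p.1 p.2) :
    ∫ x in a..b, ∫ y in c..d, H x y = ∫ y in c..d, ∫ x in a..b, H x y := by
  simp_rw [intervalIntegral.integral_of_le hab, intervalIntegral.integral_of_le hcd]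
  apply integral_integral_swap
  rw [Measure.prod_restrict, ← Measure.volume_eq_prod]
  exact ((hH.continuousOn.integrableOn_compact (isCompact_Icc.prod isCompact_Icc)).mono_set
    (prod_mono Ioc_subset_Icc_self Ioc_subset_Icc_self))


theorem statement7' (f : ℂ → ℝ → ℂ)
    (hf : Continuous (Function.uncurry f))
    (hper : ∀ z θ, f z (θ + 2 * Real.pi) = f z θ) :
    ∫ z in Disc, ∫ θ in (0:ℝ)..(2 * Real.pi), f z θ =
      ∫ α in (-(Real.pi / 2))..(Real.pi / 2), ∫ β in (0:ℝ)..(2 * Real.pi),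
        (Real.cos α : ℂ) *
          ∫ t in (0:ℝ)..(2 * Real.cos α), f (pt β α t) (β + Real.pi + α) := by
  have h2pi : (0:ℝ) ≤ 2 * Real.pi := by positivity
  have hpi2 : -(Real.pi/2) ≤ Real.pi/2 := by linarith [Real.pi_pos]
  have swap1 : ∫ z in Disc, ∫ θ in (0:ℝ)..(2*Real.pi), f z θ
      = ∫ θ in (0:ℝ)..(2*Real.pi), ∫ z in Disc, f z θ := by
    simp only [Disc]
    simp_rw [intervalIntegral.integral_of_le h2pi]
    apply integral_integral_swap
    rw [Measure.prod_restrict, ← Measure.volume_eq_prod]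
    exact (hf.continuousOn.integrableOn_compact
      ((isCompact_closedBall (0:ℂ) 1).prod isCompact_Icc)).mono_set
      (prod_mono (subset_refl _) Ioc_subset_Icc_self)
  have hdisc : ∀ θ : ℝ, ∫ z in Disc, f z θ
      = ∫ α in (-(Real.pi/2))..(Real.pi/2), Phi f θ α := by
    intro θ
    rw [rot (fun z => f z θ) θ]
    refine discIntegral (fun w => f (Complex.exp (Complex.I * θ) * w) θ) ?_
    show Continuous ((Function.uncurry f) ∘ fun w : ℂ => (Complex.exp (Complex.I * θ) * w, θ))
    exact hf.comp ((continuous_const.mul continuous_id).prodMk continuous_const)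
  have swap2 : ∫ θ in (0:ℝ)..(2*Real.pi), ∫ α in (-(Real.pi/2))..(Real.pi/2), Phi f θ α
      = ∫ α in (-(Real.pi/2))..(Real.pi/2), ∫ θ in (0:ℝ)..(2*Real.pi), Phi f θ α :=
    swap_II h2pi hpi2 (Phi f) (phi_cont f hf)
  have hshift : ∀ α : ℝ, (∫ β in (0:ℝ)..(2*Real.pi), (Real.cos α:ℂ) *
      ∫ t in (0:ℝ)..(2*Real.cos α), f (pt β α t) (β + Real.pi + α))
      = ∫ θ in (0:ℝ)..(2*Real.pi), Phi f θ α := by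
    intro α
    have h1 : ∀ β : ℝ, (Real.cos α:ℂ) *
        (∫ t in (0:ℝ)..(2*Real.cos α), f (pt β α t) (β + Real.pi + α))
        = Phi f (β + (Real.pi + α)) α := by
      intro β
      unfold Phi
      congr 1
      apply intervalIntegral.integral_congr
      intro t _
      dsimp only
      rw [pt_eq, add_assoc]
    simp_rw [h1]
    rw [intervalIntegral.integral_comp_add_right (fun θ => Phi f θ α) (Real.pi + α)]
    have hper2 := (phi_periodic f hper α).intervalIntegral_add_eq (Real.pi + α) 0
    rw [zero_add, show 2*Real.pi + (Real.pi + α) = (Real.pi + α) + 2*Real.pi by ring,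
      hper2, zero_add]
  rw [swap1]
  simp_rw [hdisc]
  rw [swap2]
  apply intervalIntegral.integral_congr
  intro α _
  exact (hshift α).symm

end Santalo

/-- **Santaló's formula on the Euclidean unit disc.** For every continuous
function `f` on `SM`,
`∫_{SM} f dx dθ = ∫_{-π/2}^{π/2} ∫₀^{2π} cos α (∫₀^{2cos α} f(γ_{β,α}(t), β+π+α) dt) dβ dα`. -/
theorem statement7 (f : ℂ → ℝ → ℂ)
    (hf : Continuous (Function.uncurry f))
    (hper : ∀ z θ, f z (θ + 2 * Real.pi) = f z θ) :
    ∫ z in Disc, ∫ θ in (0:ℝ)..(2 * Real.pi), f z θ =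
      ∫ α in (-(Real.pi / 2))..(Real.pi / 2), ∫ β in (0:ℝ)..(2 * Real.pi),
        (Real.cos α : ℂ) *
          ∫ t in (0:ℝ)..(2 * Real.cos α), f (pt β α t) (β + Real.pi + α) := by
  exact Santalo.statement7' f hf hper
end
end

section
/- For every integer k ≥ 0, every β ∈ ℝ and every α ∈ (−π/2, π/2), one has ∫₀^{2cos α} ( e^{iβ} + t e^{i(β+π+α)} )^k dt = ((−1)^k / (k+1)) · e^{ikβ} · ( e^{i(2k+1)α} + (−1)^k e^{−iα} ). Equivalently, the unattenuated X-ray transform of z^k in fan-beam coordinates is I[z^k](β,α) = ((−1)^k/(k+1)) e^{ikβ}(e^{i(2k+1)α} + (−1)^k e^{−iα}). -/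
/-! Writing `X = e^{iα}`, the chord is `t ↦ e^{iβ}(1 - tX)`, so the integrand is a polynomial
in `t` with antiderivative `-e^{ikβ}(1 - tX)^{k+1} / ((k+1)X)`. At the far end
`t = 2cos α = X + X⁻¹` the chord reaches `e^{iβ}(1 - 2cos α · X) = -e^{iβ}X²`, and the formula
follows by expanding `(-X²)^{k+1}`. -/

open MeasureTheory Set

noncomputable section

theorem integral_add_mul_pow (a d : ℂ) (hd : d ≠ 0) (k : ℕ) (x y : ℝ) :
    ∫ t in x..y, (a + t * d) ^ k =
      ((a + y * d) ^ (k + 1) - (a + x * d) ^ (k + 1)) / ((k + 1) * d) := by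
  have hk : (k : ℂ) + 1 ≠ 0 := Nat.cast_add_one_ne_zero k
  have hderiv : ∀ t ∈ uIcc x y,
      HasDerivAt (fun t : ℝ => (a + t * d) ^ (k + 1) / ((k + 1) * d)) ((a + t * d) ^ k) t := by
    intro t _
    have hline : HasDerivAt (fun t : ℝ => a + t * d) d t := by
      simpa using (Complex.ofRealCLM.hasDerivAt.mul_const d).const_add a
    refine (((hasDerivAt_pow (k + 1) _).comp t hline).div_const ((k + 1) * d)).congr_deriv ?_
    push_cast
    field_simp
  rw [intervalIntegral.integral_eq_sub_of_hasDerivAt hderiv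
    (Continuous.intervalIntegrable (by fun_prop) _ _), sub_div]

theorem exp_I_mul_add_pi_add (β α : ℝ) :
    Complex.exp (Complex.I * (β + Real.pi + α)) =
      -(Complex.exp (Complex.I * β) * Complex.exp (Complex.I * α)) := by
  rw [show Complex.I * (β + Real.pi + α) = Complex.I * β + Real.pi * Complex.I + Complex.I * α
    by ring, Complex.exp_add, Complex.exp_add, Complex.exp_pi_mul_I]
  ring

theorem one_sub_two_cos_mul_exp (α : ℝ) :
    1 - ((2 * Real.cos α : ℝ) : ℂ) * Complex.exp (Complex.I * α) =
      -Complex.exp (Complex.I * α) ^ 2 := by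
  have hcos : ((2 * Real.cos α : ℝ) : ℂ) =
      Complex.exp (Complex.I * α) + (Complex.exp (Complex.I * α))⁻¹ := by
    rw [← Complex.exp_neg]
    push_cast
    rw [Complex.cos]
    ring_nf
  rw [hcos]
  field_simp
  ring

theorem statement8_general (k : ℕ) (β α : ℝ) :
    ∫ t in (0:ℝ)..(2 * Real.cos α), (pt β α t) ^ k =
      ((-1 : ℂ) ^ k / ((k : ℂ) + 1)) * Complex.exp (Complex.I * k * β) *
        (Complex.exp (Complex.I * (2 * k + 1) * α)
          + (-1 : ℂ) ^ k * Complex.exp (-(Complex.I * α))) := by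
  set a := Complex.exp (Complex.I * β)
  set X := Complex.exp (Complex.I * α)
  have ha : a ≠ 0 := Complex.exp_ne_zero _
  have hX : X ≠ 0 := Complex.exp_ne_zero _
  have hk : (k : ℂ) + 1 ≠ 0 := Nat.cast_add_one_ne_zero k
  have hfar : a + ((2 * Real.cos α : ℝ) : ℂ) * -(a * X) = -(a * X ^ 2) := by
    linear_combination a * one_sub_two_cos_mul_exp α
  have hexp_beta : Complex.exp (Complex.I * k * β) = a ^ k := by
    rw [← Complex.exp_nat_mul]; ring_nf
  have hexp_alpha : Complex.exp (Complex.I * (2 * k + 1) * α) = X ^ (2 * k + 1) := by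
    rw [← Complex.exp_nat_mul]; push_cast; ring_nf
  have hexp_neg : Complex.exp (-(Complex.I * α)) = X⁻¹ := Complex.exp_neg _
  simp only [pt, exp_I_mul_add_pi_add]
  rw [integral_add_mul_pow a _ (neg_ne_zero.mpr (mul_ne_zero ha hX)), hfar, hexp_beta,
    hexp_alpha, hexp_neg]
  simp only [Complex.ofReal_zero, zero_mul, add_zero]
  have hsign : ((-1 : ℂ) ^ k) ^ 2 = 1 := by rw [← pow_mul, mul_comm, pow_mul]; simp
  rw [neg_pow, mul_pow, ← pow_mul]
  field_simp
  linear_combination -(a ^ k * a) * hsign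

/-- For every `k ≥ 0`, `β ∈ ℝ` and `α ∈ (-π/2, π/2)`,
`∫₀^{2cos α} (e^{iβ} + t e^{i(β+π+α)})^k dt
  = ((-1)^k/(k+1)) e^{ikβ} (e^{i(2k+1)α} + (-1)^k e^{-iα})`,
i.e. the unattenuated X-ray transform of `z^k` in fan-beam coordinates. -/
theorem statement8 (k : ℕ) (β α : ℝ) (hα : α ∈ Ioo (-(Real.pi / 2)) (Real.pi / 2)) :
    ∫ t in (0:ℝ)..(2 * Real.cos α), (pt β α t) ^ k =
      ((-1 : ℂ) ^ k / ((k : ℂ) + 1)) * Complex.exp (Complex.I * k * β) *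
        (Complex.exp (Complex.I * (2 * k + 1) * α)
          + (-1 : ℂ) ^ k * Complex.exp (-(Complex.I * α))) :=
  statement8_general k β α
end
end

section
/- For every integer k ≥ 1 and every ρ ∈ [0,1], (1/2π) ∫₀^{2π} e^{ikθ} ( √(1 − ρ² sin²θ) + i ρ sin θ )^k dθ = (−1)^k ρ^k / 2. -/
/-!
Put `z = e^{iθ}`, `c = √(1 - ρ² sin² θ)`, `v = z w_ρ(θ)` and `d = c + ρ cos θ`, which is positive
for `|ρ| < 1` because `c² - ρ² cos² θ = 1 - ρ²`. Then `v + ρ = z d` and `1 + ρ v = w_ρ d`, so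
`v (v + ρ) = z² (1 + ρ v)`. Differentiating this gives
`v' (1/v + 1/(v + ρ) - ρ/(1 + ρ v)) = 2i`, hence `2i v^k = v' (g(v) + (-ρ)^k / (v + ρ))` with
`g = regularPart ρ k` holomorphic on a disc of radius `> 1`. So `g(v) v'` has a primitive `G(v)`
and integrates to zero over a period, while `v'/(v + ρ) = i + d'/d` integrates to `2πi`. This
gives `∫₀^{2π} v^k dθ = π (-ρ)^k` for `|ρ| < 1`; the endpoints `ρ = ±1` follow by continuity in `ρ`.
-/

open Set
open scoped Real
open Complex (I)

noncomputable section

namespace UnitCurve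

def c (ρ θ : ℝ) : ℝ := Real.sqrt (1 - ρ ^ 2 * Real.sin θ ^ 2)

def w (ρ θ : ℝ) : ℂ := (c ρ θ : ℂ) + I * ((ρ * Real.sin θ : ℝ) : ℂ)

def v (ρ θ : ℝ) : ℂ := Complex.exp (θ * I) * w ρ θ

def d (ρ θ : ℝ) : ℝ := c ρ θ + ρ * Real.cos θ

variable {ρ : ℝ} (θ : ℝ)

lemma c_sq (hρ : |ρ| ≤ 1) : c ρ θ ^ 2 = 1 - ρ ^ 2 * Real.sin θ ^ 2 := by
  have := (sq_le_one_iff_abs_le_one ρ).2 hρ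
  exact Real.sq_sqrt (by nlinarith [Real.sin_sq_le_one θ, sq_nonneg ρ])

lemma one_sub_sq_mul_sin_sq_pos (hρ : |ρ| < 1) : 0 < 1 - ρ ^ 2 * Real.sin θ ^ 2 := by
  have := (sq_lt_one_iff_abs_lt_one ρ).2 hρ
  nlinarith [Real.sin_sq_le_one θ, sq_nonneg ρ]

lemma c_pos (hρ : |ρ| < 1) : 0 < c ρ θ :=
  Real.sqrt_pos.2 (one_sub_sq_mul_sin_sq_pos θ hρ)

lemma d_pos (hρ : |ρ| < 1) : 0 < d ρ θ := by
  have hc := c_sq θ hρ.le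
  have := (sq_lt_one_iff_abs_lt_one ρ).2 hρ
  have : |ρ * Real.cos θ| < c ρ θ :=
    abs_lt_of_sq_lt_sq (by nlinarith [Real.sin_sq_add_cos_sq θ]) (c_pos θ hρ).le
  unfold d
  linarith [neg_abs_le (ρ * Real.cos θ)]

lemma norm_w (hρ : |ρ| ≤ 1) : ‖w ρ θ‖ = 1 := by
  rw [w, mul_comm, Complex.norm_add_mul_I, c_sq θ hρ, ← Real.sqrt_one]
  congr 1
  ring

lemma norm_v (hρ : |ρ| ≤ 1) : ‖v ρ θ‖ = 1 := by
  simp [v, norm_w θ hρ, Complex.norm_exp]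

lemma v_add : v ρ θ + ρ = Complex.exp (θ * I) * d ρ θ := by
  rw [v, w, d, Complex.exp_mul_I]
  push_cast
  linear_combination (-ρ : ℂ) * Complex.cos_sq_add_sin_sq (θ : ℂ)
    + ρ * Complex.sin θ ^ 2 * Complex.I_sq

lemma one_add_mul_v (hρ : |ρ| ≤ 1) : 1 + ρ * v ρ θ = w ρ θ * d ρ θ := by
  have hc : (c ρ θ : ℂ) ^ 2 = 1 - ρ ^ 2 * Complex.sin θ ^ 2 := by
    exact_mod_cast c_sq θ hρ
  rw [v, w, d, Complex.exp_mul_I]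
  push_cast
  linear_combination (-1 : ℂ) * hc + ρ ^ 2 * Complex.sin θ ^ 2 * Complex.I_sq

lemma v_mul_v_add (hρ : |ρ| ≤ 1) :
    v ρ θ * (v ρ θ + ρ) = Complex.exp (θ * I) ^ 2 * (1 + ρ * v ρ θ) := by
  rw [v_add, one_add_mul_v θ hρ, v]
  ring

lemma v_ne_zero (hρ : |ρ| ≤ 1) : v ρ θ ≠ 0 :=
  norm_ne_zero_iff.1 (by simp [norm_v θ hρ])

lemma v_add_ne_zero (hρ : |ρ| < 1) : v ρ θ + ρ ≠ 0 := by
  rw [v_add]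
  exact mul_ne_zero (Complex.exp_ne_zero _) (by exact_mod_cast (d_pos θ hρ).ne')

lemma one_add_mul_v_ne_zero (hρ : |ρ| < 1) : 1 + ρ * v ρ θ ≠ 0 := by
  rw [one_add_mul_v θ hρ.le]
  exact mul_ne_zero (norm_ne_zero_iff.1 (by simp [norm_w θ hρ.le]))
    (by exact_mod_cast (d_pos θ hρ).ne')

lemma hasDerivAt_exp_mul_I :
    HasDerivAt (fun t : ℝ => Complex.exp (t * I)) (Complex.exp (θ * I) * I) θ := by
  simpa using ((hasDerivAt_id θ).ofReal_comp.mul_const I).cexp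

lemma differentiableAt_c (hρ : |ρ| < 1) : DifferentiableAt ℝ (c ρ) θ :=
  DifferentiableAt.sqrt (by fun_prop) (one_sub_sq_mul_sin_sq_pos θ hρ).ne'

lemma differentiableAt_v (hρ : |ρ| < 1) : DifferentiableAt ℝ (v ρ) θ := by
  have := differentiableAt_c θ hρ
  unfold v w
  fun_prop

lemma differentiableAt_d (hρ : |ρ| < 1) : DifferentiableAt ℝ (d ρ) θ := by
  have := differentiableAt_c θ hρ
  unfold d
  fun_prop

lemma deriv_v_mul (hρ : |ρ| < 1) :
    deriv (v ρ) θ * ((v ρ θ)⁻¹ + (v ρ θ + ρ)⁻¹ - ρ * (1 + ρ * v ρ θ)⁻¹) = 2 * I := by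
  have hv := (differentiableAt_v θ hρ).hasDerivAt
  have hz := hasDerivAt_exp_mul_I θ
  have hlhs := hv.fun_mul (hv.add_const (ρ : ℂ))
  have hrhs := (hz.fun_pow 2).fun_mul ((hv.const_mul (ρ : ℂ)).const_add 1)
  rw [show (fun t : ℝ => v ρ t * (v ρ t + ρ))
      = fun t : ℝ => Complex.exp (t * I) ^ 2 * (1 + ρ * v ρ t)
    from funext fun t => v_mul_v_add t hρ.le] at hlhs
  have key := hlhs.unique hrhs
  have hB := v_mul_v_add θ hρ.le
  have h1 := v_ne_zero θ hρ.le
  have h2 := v_add_ne_zero θ hρ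
  have h3 := one_add_mul_v_ne_zero θ hρ
  have : deriv (v ρ) θ * ((v ρ θ + ρ) * (1 + ρ * v ρ θ) + v ρ θ * (1 + ρ * v ρ θ)
      - ρ * v ρ θ * (v ρ θ + ρ)) = 2 * I * (v ρ θ * (v ρ θ + ρ) * (1 + ρ * v ρ θ)) := by
    linear_combination (1 + ρ * v ρ θ) * key + (-ρ * deriv (v ρ) θ - 2 * I * (1 + ρ * v ρ θ)) * hB
  have h3' : 1 + v ρ θ * ρ ≠ 0 := by rwa [mul_comm] at h3
  field_simp
  linear_combination this

lemma hasDerivAt_I_mul_add_log_d (hρ : |ρ| < 1) :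
    HasDerivAt (fun t : ℝ => I * t + (Real.log (d ρ t) : ℂ)) (deriv (v ρ) θ / (v ρ θ + ρ)) θ := by
  have hd := (differentiableAt_d θ hρ).hasDerivAt
  have hv := (differentiableAt_v θ hρ).hasDerivAt
  have hz := hasDerivAt_exp_mul_I θ
  have hsum := hv.add_const (ρ : ℂ)
  rw [show (fun t : ℝ => v ρ t + ρ) = fun t : ℝ => Complex.exp (t * I) * d ρ t
    from funext fun t => v_add t] at hsum
  have key := hsum.unique (hz.fun_mul hd.ofReal_comp)
  have hlog : HasDerivAt (fun t : ℝ => I * t + (Real.log (d ρ t) : ℂ))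
      (I + (deriv (d ρ) θ / d ρ θ : ℝ)) θ := by
    simpa using ((hasDerivAt_id θ).ofReal_comp.const_mul I).fun_add
      (hd.log (d_pos θ hρ).ne').ofReal_comp
  convert hlog using 1
  have : (d ρ θ : ℂ) ≠ 0 := by exact_mod_cast (d_pos θ hρ).ne'
  rw [v_add, key]
  push_cast
  field_simp

lemma continuous_v : Continuous (v ρ) := by
  unfold v w c
  fun_prop

lemma v_two_pi : v ρ (2 * π) = v ρ 0 := by
  simp [v, w, c, Complex.exp_two_pi_mul_I]

lemma d_two_pi : d ρ (2 * π) = d ρ 0 := by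
  simp [d, c]

def regularPart (ρ : ℝ) (k : ℕ) (u : ℂ) : ℂ :=
  u ^ (k - 1) + ∑ j ∈ Finset.range k, u ^ j * (-ρ : ℂ) ^ (k - 1 - j) - ρ * u ^ k / (1 + ρ * u)

-- Any radius in `(1, 1/|ρ|)` would do; this one needs no case split on `ρ = 0`.
lemma differentiableOn_regularPart (hρ : |ρ| < 1) (k : ℕ) :
    DifferentiableOn ℂ (regularPart ρ k) (Metric.ball 0 (2 / (1 + |ρ|))) := by
  intro u hu
  have hu' : |ρ| * ‖u‖ < 1 := by
    rw [mem_ball_zero_iff, lt_div_iff₀ (by positivity)] at hu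
    nlinarith [abs_nonneg ρ, norm_nonneg u]
  have hne : 1 + ρ * u ≠ 0 := by
    intro h
    have : ‖(ρ : ℂ) * u‖ = 1 := by rw [eq_neg_of_add_eq_zero_right h]; simp
    rw [norm_mul, Complex.norm_real, Real.norm_eq_abs] at this
    linarith
  unfold regularPart
  exact DifferentiableAt.differentiableWithinAt (by fun_prop (disch := exact hne))

lemma pow_mul_logDeriv_eq {k : ℕ} (hk : 1 ≤ k) {u : ℂ} (hu : u ≠ 0) (hu₁ : u + ρ ≠ 0) :
    u ^ k * (u⁻¹ + (u + ρ)⁻¹ - ρ * (1 + ρ * u)⁻¹) = regularPart ρ k u + (-ρ) ^ k / (u + ρ) := by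
  have hpow : u ^ k * u⁻¹ = u ^ (k - 1) := by
    rw [← div_eq_mul_inv, div_eq_iff hu, ← pow_succ, Nat.sub_add_cancel hk]
  have hgeom : u ^ k * (u + ρ)⁻¹
      = ∑ j ∈ Finset.range k, u ^ j * (-ρ : ℂ) ^ (k - 1 - j) + (-ρ) ^ k / (u + ρ) := by
    field_simp
    linear_combination -geom_sum₂_mul u (-ρ : ℂ) k
  rw [mul_sub, mul_add, hpow, hgeom, regularPart]
  ring

lemma hasDerivAt_primitive (hρ : |ρ| < 1) {k : ℕ} (hk : 1 ≤ k) {H : ℂ → ℂ}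
    (hH : ∀ u ∈ Metric.ball 0 (2 / (1 + |ρ|)), HasDerivAt H (regularPart ρ k u) u) :
    HasDerivAt (fun t : ℝ => (2 * I)⁻¹ * (H (v ρ t) + (-ρ) ^ k * (I * t + Real.log (d ρ t))))
      (v ρ θ ^ k) θ := by
  have hmem : v ρ θ ∈ Metric.ball 0 (2 / (1 + |ρ|)) := by
    rw [mem_ball_zero_iff, norm_v θ hρ.le, lt_div_iff₀ (by positivity)]
    linarith
  have hv := (differentiableAt_v θ hρ).hasDerivAt
  have hG := (((hH _ hmem).comp θ hv).fun_add
    ((hasDerivAt_I_mul_add_log_d θ hρ).const_mul ((-ρ : ℂ) ^ k))).const_mul (2 * I)⁻¹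
  refine hG.congr_deriv ?_
  have hsplit := pow_mul_logDeriv_eq hk (v_ne_zero θ hρ.le) (v_add_ne_zero θ hρ)
  calc (2 * I)⁻¹ * (regularPart ρ k (v ρ θ) * deriv (v ρ) θ
          + (-ρ) ^ k * (deriv (v ρ) θ / (v ρ θ + ρ)))
      = (2 * I)⁻¹ * (deriv (v ρ) θ * (regularPart ρ k (v ρ θ) + (-ρ) ^ k / (v ρ θ + ρ))) := by
        ring
    _ = (2 * I)⁻¹ * (deriv (v ρ) θ * ((v ρ θ)⁻¹ + (v ρ θ + ρ)⁻¹ - ρ * (1 + ρ * v ρ θ)⁻¹))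
          * v ρ θ ^ k := by
        rw [← hsplit]; ring
    _ = v ρ θ ^ k := by
        rw [deriv_v_mul θ hρ]; field_simp

lemma integral_v_pow (hρ : |ρ| < 1) {k : ℕ} (hk : 1 ≤ k) :
    ∫ θ in (0 : ℝ)..2 * π, v ρ θ ^ k = (-ρ) ^ k * π := by
  obtain ⟨H, hH⟩ := (differentiableOn_regularPart hρ k).isExactOn_ball
  rw [intervalIntegral.integral_eq_sub_of_hasDerivAt (fun θ _ => hasDerivAt_primitive θ hρ hk hH)
    ((continuous_v.pow k).intervalIntegrable _ _), v_two_pi, d_two_pi]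
  field_simp
  push_cast
  ring

lemma exp_mul_w_pow (k : ℕ) :
    Complex.exp (I * k * θ) * w ρ θ ^ k = v ρ θ ^ k := by
  rw [v, mul_pow, ← Complex.exp_nat_mul]
  ring_nf

lemma integral_exp_mul_w_pow {k : ℕ} (hk : 1 ≤ k) (hρ : ρ ∈ Icc (-1) 1) :
    ∫ θ in (0 : ℝ)..2 * π, Complex.exp (I * k * θ) * w ρ θ ^ k = (-ρ) ^ k * π := by
  have hclosed : IsClosed {r : ℝ |
      ∫ θ in (0 : ℝ)..2 * π, Complex.exp (I * k * θ) * w r θ ^ k = (-r) ^ k * π} := by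
    refine isClosed_eq ?_ (by fun_prop)
    apply intervalIntegral.continuous_parametric_intervalIntegral_of_continuous'
    unfold w c
    fun_prop
  refine (closure_Ioo (by norm_num : (-1 : ℝ) ≠ 1) ▸ hclosed.closure_subset_iff.2 ?_) hρ
  intro r hr
  simp only [mem_ofPred_eq, exp_mul_w_pow]
  exact integral_v_pow (abs_lt.2 hr) hk

end UnitCurve

/-- For every `k ≥ 1` and `ρ ∈ [0,1]`,
`(1/2π) ∫₀^{2π} e^{ikθ} (√(1 - ρ² sin²θ) + iρ sin θ)^k dθ = (-1)^k ρ^k / 2`. -/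
theorem statement11 (k : ℕ) (hk : 1 ≤ k) (ρ : ℝ) (h0 : 0 ≤ ρ) (h1 : ρ ≤ 1) :
    (1 / (2 * (Real.pi : ℂ))) *
      ∫ θ in (0:ℝ)..(2 * Real.pi),
        Complex.exp (Complex.I * k * θ) *
          ((Real.sqrt (1 - ρ ^ 2 * Real.sin θ ^ 2) : ℂ)
            + Complex.I * ((ρ * Real.sin θ : ℝ) : ℂ)) ^ k
    = (-1 : ℂ) ^ k * (ρ : ℂ) ^ k / 2 := by
  have h := UnitCurve.integral_exp_mul_w_pow hk ⟨by linarith, h1⟩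
  unfold UnitCurve.w UnitCurve.c at h
  rw [h, neg_pow]
  field_simp
end
end

section
/- For all integers k, m with 0 ≤ m < k and k ≡ m (mod 2), and every ρ ∈ [0,1], ∫₀^{2π} e^{ikθ} ( √(1 − ρ² sin²θ) + i ρ sin θ )^m dθ = 0. -/
/-!
Write `w = w_ρ(θ)`. Shifting `θ` by `π` replaces `w` by its conjugate and `e^{ikθ}` by
`(-1)^k e^{ikθ} = (-1)^m e^{ikθ}`; as the integrand is `2π`-periodic, its integral is half the
integral of `e^{ikθ} (w^m + (-1)^m w̄^m)`. Since `|w| = 1` the bracket equals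
`2 i^m T_m(Im w) = 2 i^m T_m(ρ sin θ)`, a polynomial of degree `m < k` in `sin θ`, and each
`e^{ikθ} sin^j θ` with `j < k` integrates to zero over a period.
-/

open Complex Polynomial
open scoped Real ComplexConjugate

theorem Polynomial.Chebyshev.two_mul_T_eval_of_mul_eq_one {R : Type*} [CommRing R]
    [Invertible (2 : R)] {x y s : R} (hxy : x * y = 1) (hs : x + y = 2 * s) (n : ℕ) :
    2 * (Chebyshev.T R n).eval s = x ^ n + y ^ n := by
  rw [← dickson_one_one_eval_add_inv x y hxy, dickson_one_one_eq_chebyshev_T, eval_mul,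
    eval_comp, hs]
  simp [← mul_assoc]

theorem pow_add_neg_one_pow_mul_conj_pow {z : ℂ} (hz : ‖z‖ = 1) (n : ℕ) :
    z ^ n + (-1) ^ n * conj z ^ n = 2 * I ^ n * (Chebyshev.T ℂ n).eval (z.im : ℂ) := by
  have hxy : (-I * z) * (I * conj z) = 1 := by
    rw [mul_mul_mul_comm, RCLike.mul_conj, hz]; simp
  have hs : -I * z + I * conj z = 2 * (z.im : ℂ) := by
    have h := sub_conj z
    push_cast at h
    linear_combination (-I) * h + (-2 * (z.im : ℂ)) * I_sq
  have hx : I * (-I * z) = z := by linear_combination (-z) * I_sq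
  have hy : I * (I * conj z) = -conj z := by linear_combination conj z * I_sq
  rw [mul_comm 2, mul_assoc, Chebyshev.two_mul_T_eval_of_mul_eq_one hxy hs, mul_add,
    ← mul_pow I, ← mul_pow I, hx, hy]
  ring

theorem exp_I_mul_nat_mul_add_two_pi (k : ℕ) (θ : ℝ) :
    exp (I * k * ↑(θ + 2 * π)) = exp (I * k * θ) := by
  rw [show I * k * ↑(θ + 2 * π) = I * k * θ + k * (2 * π * I) by push_cast; ring, exp_add,
    exp_nat_mul_two_pi_mul_I, mul_one]

theorem exp_I_mul_nat_mul_add_pi (k : ℕ) (θ : ℝ) :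
    exp (I * k * ↑(θ + π)) = (-1) ^ k * exp (I * k * θ) := by
  rw [show I * k * ↑(θ + π) = k * (π * I) + I * k * θ by push_cast; ring, exp_add,
    exp_nat_mul, exp_pi_mul_I]

theorem integral_exp_I_mul_nat_mul {k : ℕ} (hk : k ≠ 0) :
    ∫ θ in (0:ℝ)..2 * π, exp (I * k * θ) = 0 := by
  have h2π := exp_I_mul_nat_mul_add_two_pi k 0
  rw [zero_add] at h2π
  rw [integral_exp_mul_complex (by simp [hk]), h2π, sub_self, zero_div]

theorem exp_I_mul_succ_mul_sin (k : ℕ) (θ : ℝ) :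
    exp (I * ↑(k + 1) * θ) * sin θ = (exp (I * k * θ) - exp (I * ↑(k + 2) * θ)) * I / 2 := by
  have h1 : exp (I * ↑(k + 1) * θ) * exp (-θ * I) = exp (I * k * θ) := by
    rw [← exp_add]; push_cast; ring_nf
  have h2 : exp (I * ↑(k + 1) * θ) * exp (θ * I) = exp (I * ↑(k + 2) * θ) := by
    rw [← exp_add]; push_cast; ring_nf
  rw [Complex.sin, ← h1, ← h2]
  ring

theorem integral_exp_I_mul_nat_mul_sin_pow {j k : ℕ} (h : j < k) :
    ∫ θ in (0:ℝ)..2 * π, exp (I * k * θ) * sin θ ^ j = 0 := by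
  induction j generalizing k with
  | zero => simpa using integral_exp_I_mul_nat_mul (by omega)
  | succ j ih =>
    obtain ⟨k, rfl⟩ : ∃ k', k = k' + 1 := ⟨k - 1, by omega⟩
    have hsplit : ∀ θ : ℝ, exp (I * ↑(k + 1) * θ) * sin θ ^ (j + 1)
        = I / 2 * (exp (I * k * θ) * sin θ ^ j - exp (I * ↑(k + 2) * θ) * sin θ ^ j) := by
      intro θ
      rw [pow_succ, mul_comm (sin _ ^ j), ← mul_assoc, exp_I_mul_succ_mul_sin]
      ring
    simp_rw [hsplit]
    rw [intervalIntegral.integral_const_mul,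
      intervalIntegral.integral_sub (Continuous.intervalIntegrable (by fun_prop) _ _)
        (Continuous.intervalIntegrable (by fun_prop) _ _), ih (by omega), ih (by omega),
      sub_zero, mul_zero]

theorem integral_exp_I_mul_nat_mul_eval_sin {k : ℕ} {p : ℂ[X]} (hp : p.natDegree < k) :
    ∫ θ in (0:ℝ)..2 * π, exp (I * k * θ) * p.eval (sin θ) = 0 := by
  simp_rw [eval_eq_sum_range, Finset.mul_sum]
  rw [intervalIntegral.integral_finsetSum
    (fun i _ => Continuous.intervalIntegrable (by fun_prop) _ _)]
  refine Finset.sum_eq_zero fun i hi => ?_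
  simp_rw [mul_left_comm (exp _)]
  rw [intervalIntegral.integral_const_mul,
    integral_exp_I_mul_nat_mul_sin_pow (by simp at hi; omega), mul_zero]

theorem Function.Periodic.intervalIntegral_eq_zero_of_integral_add_half_period
    {E : Type*} [NormedAddCommGroup E] [NormedSpace ℝ E] {f : ℝ → E} {T : ℝ}
    (hf : Function.Periodic f (2 * T)) (hcont : Continuous f)
    (h : ∫ x in (0:ℝ)..2 * T, (f x + f (x + T)) = 0) :
    ∫ x in (0:ℝ)..2 * T, f x = 0 := by
  have hshift : ∫ x in (0:ℝ)..2 * T, f (x + T) = ∫ x in (0:ℝ)..2 * T, f x := by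
    rw [intervalIntegral.integral_comp_add_right, zero_add, show 2 * T + T = T + 2 * T by ring,
      hf.intervalIntegral_add_eq T 0, zero_add]
  rw [intervalIntegral.integral_add (hcont.intervalIntegrable _ _)
    (Continuous.intervalIntegrable (by fun_prop) _ _), hshift, ← two_smul ℝ] at h
  exact (smul_eq_zero.mp h).resolve_left two_ne_zero

noncomputable def w (ρ θ : ℝ) : ℂ :=
  Real.sqrt (1 - ρ ^ 2 * Real.sin θ ^ 2) + I * ((ρ * Real.sin θ : ℝ) : ℂ)

@[fun_prop]
theorem continuous_w (ρ : ℝ) : Continuous (w ρ) := by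
  unfold w; fun_prop

theorem w_im (ρ θ : ℝ) : (w ρ θ).im = ρ * Real.sin θ := by
  simp [w, sin_ofReal_re]

theorem w_add_two_pi (ρ θ : ℝ) : w ρ (θ + 2 * π) = w ρ θ := by
  simp [w, Real.sin_add_two_pi]

theorem w_add_pi (ρ θ : ℝ) : w ρ (θ + π) = conj (w ρ θ) := by
  apply Complex.ext <;> simp [w, Real.sin_add_pi]

theorem norm_w {ρ : ℝ} (hρ : |ρ| ≤ 1) (θ : ℝ) : ‖w ρ θ‖ = 1 := by
  have hs : ρ ^ 2 * Real.sin θ ^ 2 ≤ 1 := by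
    rw [← mul_pow, sq_le_one_iff_abs_le_one, abs_mul]
    exact mul_le_one₀ hρ (abs_nonneg _) (Real.abs_sin_le_one θ)
  have hsq : ‖w ρ θ‖ ^ 2 = 1 := by
    rw [Complex.sq_norm, normSq_apply, ← sq, ← sq, w_im, mul_pow]
    simp [w, Real.sq_sqrt (sub_nonneg.2 hs)]
  exact (pow_eq_one_iff_of_nonneg (norm_nonneg _) two_ne_zero).1 hsq

/-- For all integers `0 ≤ m < k` with `k ≡ m (mod 2)` and every
`ρ ∈ [0,1]`, `∫₀^{2π} e^{ikθ} (√(1 - ρ² sin²θ) + iρ sin θ)^m dθ = 0`. -/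
theorem statement12 (k m : ℕ) (hm : m < k) (hpar : k % 2 = m % 2)
    (ρ : ℝ) (h0 : 0 ≤ ρ) (h1 : ρ ≤ 1) :
    ∫ θ in (0:ℝ)..(2 * Real.pi),
        Complex.exp (Complex.I * k * θ) *
          ((Real.sqrt (1 - ρ ^ 2 * Real.sin θ ^ 2) : ℂ)
            + Complex.I * ((ρ * Real.sin θ : ℝ) : ℂ)) ^ m
      = 0 := by
  set F : ℝ → ℂ := fun θ => exp (I * k * θ) * w ρ θ ^ m
  change ∫ θ in (0:ℝ)..2 * π, F θ = 0
  have hρ : |ρ| ≤ 1 := abs_le.2 ⟨by linarith, h1⟩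
  have hF_periodic : Function.Periodic F (2 * π) := fun θ => by
    simp only [F, exp_I_mul_nat_mul_add_two_pi, w_add_two_pi]
  have hF_shift (θ : ℝ) : F θ + F (θ + π)
      = 2 * I ^ m *
        (exp (I * k * θ) * ((Chebyshev.T ℂ m).comp (C (ρ : ℂ) * X)).eval (sin θ)) := by
    have hk : (-1 : ℂ) ^ k = (-1) ^ m := by
      rw [neg_one_pow_eq_pow_mod_two, hpar, ← neg_one_pow_eq_pow_mod_two]
    simp only [F, exp_I_mul_nat_mul_add_pi, w_add_pi, hk, eval_comp, eval_mul, eval_C, eval_X]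
    have hcheb := pow_add_neg_one_pow_mul_conj_pow (norm_w hρ θ) m
    rw [w_im] at hcheb
    push_cast at hcheb
    linear_combination exp (I * k * θ) * hcheb
  have hdeg : ((Chebyshev.T ℂ m).comp (C (ρ : ℂ) * X)).natDegree < k := by
    refine (natDegree_comp_le.trans ?_).trans_lt hm
    rw [Chebyshev.natDegree_T, Int.natAbs_natCast]
    exact mul_le_of_le_one_right (Nat.zero_le m) ((natDegree_C_mul_le _ _).trans natDegree_X_le)
  refine hF_periodic.intervalIntegral_eq_zero_of_integral_add_half_period (by fun_prop) ?_
  simp_rw [hF_shift]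
  rw [intervalIntegral.integral_const_mul, integral_exp_I_mul_nat_mul_eval_sin hdeg, mul_zero]
end

section
/- Fix an integer k ≥ 1 and a point z = ρe^{iβ} of the open unit disc (0 ≤ ρ < 1). For 0 ≤ p ≤ k define J_{k,p}(z) := (1/2π) ∫₀^{2π} e^{ik β₋(z,θ)} e^{2ip α₋(z,θ)} dθ. Then J_{k,0}(z) = (−1)^k J_{k,k}(z) = z^k / 2, and J_{k,p}(z) = 0 for every 0 < p < k; consequently Σ_{p=0}^{k} (−1)^p J_{k,p}(z) = z^k. -/
open MeasureTheory Set

noncomputable section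

/-- The unit-modulus number `w = √(1 - ρ² sin²(θ-β)) + iρ sin(θ-β)`; the fan-beam
coordinates `(β₋, α₋)` of the ingoing point of the line through `ρe^{iβ}` with
direction `e^{iθ}` satisfy `e^{iβ₋} = -e^{iθ} w` and `e^{iα₋} = conj w`. -/
def wq (ρ β θ : ℝ) : ℂ :=
  (Real.sqrt (1 - ρ ^ 2 * Real.sin (θ - β) ^ 2) : ℂ)
    + Complex.I * ((ρ * Real.sin (θ - β) : ℝ) : ℂ)

/-!
Put `θ = β + φ`. Then `w = e^{iα}` with `sin α = ρ sin φ`, and the integrand is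
`(-e^{iβ})^k v^k w^{-2p}` with `v = e^{iψ}`, `ψ = φ + α`. The map `φ ↦ ψ` is an increasing
bijection of `[0, 2π]`, and `sin α = ρ sin φ` amounts to `e^{2iφ} = v (v + ρ) / (1 + ρ v)`.
So `w^{-2} = (v + ρ) / (v (1 + ρ v))` and `dφ / dψ` are rational in `v`, and substituting `ψ`
for `φ` turns the integral into a contour integral over `|v| = 1` of a rational function. In
the disc its only possible poles are `v = -ρ` (present iff `p = 0`) and `v = 0` (iff `p = k`),
so Cauchy's formula gives `π (-ρ)^k`, `π ρ^k`, and `0` otherwise.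
-/

namespace FanBeam

open Complex

lemma integral_comp_add_of_periodic {E : Type*} [NormedAddCommGroup E] [NormedSpace ℝ E]
    {f : ℝ → E} {T : ℝ} (hf : Function.Periodic f T) (β : ℝ) :
    ∫ x in (0)..T, f (x + β) = ∫ x in (0)..T, f x := by
  rw [intervalIntegral.integral_comp_add_right, zero_add, add_comm,
    hf.intervalIntegral_add_eq β 0, zero_add]

lemma integral_exp_mul_I_eq_circleIntegral (g : ℂ → ℂ) :
    ∫ x in (0)..(2 * Real.pi), g (exp (x * I)) = ∮ v in C(0, 1), (v * I)⁻¹ * g v := by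
  simp only [circleIntegral, deriv_circleMap, circleMap_zero, ofReal_one, one_mul, smul_eq_mul]
  refine intervalIntegral.integral_congr fun x _ => ?_
  rw [← mul_assoc, mul_inv_cancel₀ (mul_ne_zero (exp_ne_zero _) I_ne_zero), one_mul]

lemma exp_mul_I_add_inv (x : ℝ) : exp (x * I) + (exp (x * I))⁻¹ = 2 * Real.cos x := by
  rw [← exp_neg, ← neg_mul, ← two_cos, ofReal_cos]

lemma exp_mul_I_sub_inv (x : ℝ) : exp (x * I) - (exp (x * I))⁻¹ = 2 * Real.sin x * I := by
  rw [← exp_neg, ← neg_mul, exp_mul_I, exp_mul_I, cos_neg, sin_neg, ofReal_sin]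
  ring

variable {ρ : ℝ}

-- For `u = e^{iφ}` and `w = e^{iα}` the hypothesis says `sin α = ρ sin φ`.
lemma inv_sq_mul_eq_of_sub_inv_eq {u w : ℂ} (hu : u ≠ 0) (hw : w ≠ 0)
    (h : w - w⁻¹ = ρ * (u - u⁻¹)) :
    w⁻¹ ^ 2 * (u * w * (1 + ρ * (u * w))) = u * w + ρ := by
  field_simp at h ⊢
  linear_combination -h

lemma add_inv_mul_eq_of_sub_inv_eq {u w : ℂ} (hu : u ≠ 0) (hw : w ≠ 0)
    (h : w - w⁻¹ = ρ * (u - u⁻¹)) :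
    (w + w⁻¹ + ρ * (u + u⁻¹)) * (ρ * (u * w) ^ 2 + 2 * (u * w) + ρ) =
      2 * (w + w⁻¹) * ((u * w + ρ) * (1 + ρ * (u * w))) := by
  field_simp at h ⊢
  linear_combination (ρ - ρ * u ^ 2 * w ^ 2) * h

lemma one_add_mul_ne_zero (hρ : |ρ| < 1) {v : ℂ} (hv : ‖v‖ ≤ 1) : 1 + ρ * v ≠ 0 := by
  intro h
  have : ‖(ρ : ℂ) * v‖ = 1 := by rw [eq_neg_of_add_eq_zero_right h, norm_neg, norm_one]
  rw [norm_mul, norm_real, Real.norm_eq_abs] at this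
  nlinarith [abs_nonneg ρ, norm_nonneg v]

lemma add_ne_zero_of_norm_eq_one (hρ : |ρ| < 1) {v : ℂ} (hv : ‖v‖ = 1) : v + ρ ≠ 0 := by
  intro h
  rw [eq_neg_of_add_eq_zero_left h, norm_neg, norm_real, Real.norm_eq_abs] at hv
  linarith

lemma ne_zero_of_mem_sphere (hρ : |ρ| < 1) {v : ℂ} (hv : v ∈ Metric.sphere 0 1) :
    v ≠ 0 ∧ v + ρ ≠ 0 ∧ 1 + ρ * v ≠ 0 := by
  have hv1 : ‖v‖ = 1 := mem_sphere_zero_iff_norm.mp hv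
  exact ⟨norm_ne_zero_iff.mp (by rw [hv1]; exact one_ne_zero),
    add_ne_zero_of_norm_eq_one hρ hv1, one_add_mul_ne_zero hρ hv1.le⟩

lemma abs_mul_sin_lt_one (hρ : |ρ| < 1) (φ : ℝ) : |ρ * Real.sin φ| < 1 := by
  rw [abs_mul]
  exact (mul_le_of_le_one_right (abs_nonneg ρ) (Real.abs_sin_le_one φ)).trans_lt hρ

lemma sqrt_one_sub_mul_sin_sq_pos (hρ : |ρ| < 1) (φ : ℝ) :
    0 < √(1 - (ρ * Real.sin φ) ^ 2) := by
  have := abs_mul_sin_lt_one hρ φ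
  exact Real.sqrt_pos.mpr (by nlinarith [sq_abs (ρ * Real.sin φ), abs_nonneg (ρ * Real.sin φ)])

lemma wq_eq_exp_arcsin (hρ : |ρ| < 1) (β θ : ℝ) :
    wq ρ β θ = exp (Real.arcsin (ρ * Real.sin (θ - β)) * I) := by
  obtain ⟨hlo, hhi⟩ := abs_lt.mp (abs_mul_sin_lt_one hρ (θ - β))
  rw [exp_mul_I, ← ofReal_cos, ← ofReal_sin, Real.cos_arcsin, Real.sin_arcsin hlo.le hhi.le, wq,
    mul_pow, mul_comm I]

def phase (ρ φ : ℝ) : ℝ := φ + Real.arcsin (ρ * Real.sin φ)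

def phaseDeriv (ρ φ : ℝ) : ℝ := 1 + ρ * Real.cos φ / √(1 - (ρ * Real.sin φ) ^ 2)

-- `e^{ikψ} w^{-2p}` as a function of `v = e^{iψ}`.
def kernel (ρ : ℝ) (k p : ℕ) (v : ℂ) : ℂ := v ^ k * ((v + ρ) / (v * (1 + ρ * v))) ^ p

-- `dφ / dψ` at `v = e^{iψ}`: half the logarithmic derivative `v Q'(v) / Q(v)` of
-- `Q(v) = v (v + ρ) / (1 + ρ v) = e^{2iφ}`.
def jacobian (ρ : ℝ) (v : ℂ) : ℂ := (ρ * v ^ 2 + 2 * v + ρ) / (2 * ((v + ρ) * (1 + ρ * v)))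

lemma exp_phase_mul_I (ρ φ : ℝ) :
    exp (phase ρ φ * I) = exp (φ * I) * exp (Real.arcsin (ρ * Real.sin φ) * I) := by
  rw [phase, ofReal_add, add_mul, exp_add]

lemma exp_arcsin_sub_inv (hρ : |ρ| < 1) (φ : ℝ) :
    exp (Real.arcsin (ρ * Real.sin φ) * I) - (exp (Real.arcsin (ρ * Real.sin φ) * I))⁻¹ =
      ρ * (exp (φ * I) - (exp (φ * I))⁻¹) := by
  obtain ⟨hlo, hhi⟩ := abs_lt.mp (abs_mul_sin_lt_one hρ φ)
  rw [exp_mul_I_sub_inv, exp_mul_I_sub_inv, Real.sin_arcsin hlo.le hhi.le]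
  push_cast
  ring

lemma exp_arcsin_add_inv (φ : ℝ) :
    exp (Real.arcsin (ρ * Real.sin φ) * I) + (exp (Real.arcsin (ρ * Real.sin φ) * I))⁻¹ =
      2 * (√(1 - (ρ * Real.sin φ) ^ 2) : ℝ) := by
  rw [exp_mul_I_add_inv, Real.cos_arcsin]

lemma phaseDeriv_eq (hρ : |ρ| < 1) (φ : ℝ) :
    let u := exp (φ * I); let w := exp (Real.arcsin (ρ * Real.sin φ) * I)
    (phaseDeriv ρ φ : ℂ) = (w + w⁻¹ + ρ * (u + u⁻¹)) / (w + w⁻¹) := by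
  intro u w
  have hc := sqrt_one_sub_mul_sin_sq_pos hρ φ
  rw [exp_arcsin_add_inv, exp_mul_I_add_inv, phaseDeriv]
  generalize √(1 - (ρ * Real.sin φ) ^ 2) = c at hc ⊢
  have : (c : ℂ) ≠ 0 := ofReal_ne_zero.mpr hc.ne'
  push_cast
  field_simp

lemma phaseDeriv_mul_jacobian (hρ : |ρ| < 1) (φ : ℝ) :
    (phaseDeriv ρ φ : ℂ) * jacobian ρ (exp (phase ρ φ * I)) = 1 := by
  set u := exp (φ * I)
  set w := exp (Real.arcsin (ρ * Real.sin φ) * I)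
  have hu : u ≠ 0 := exp_ne_zero _
  have hw : w ≠ 0 := exp_ne_zero _
  have huw : ‖u * w‖ = 1 := by simp only [u, w, norm_mul, norm_exp_ofReal_mul_I, mul_one]
  have h1 := one_add_mul_ne_zero hρ huw.le
  have h2 := add_ne_zero_of_norm_eq_one hρ huw
  have h3 : w + w⁻¹ ≠ 0 := by
    rw [exp_arcsin_add_inv]
    exact mul_ne_zero two_ne_zero (ofReal_ne_zero.mpr (sqrt_one_sub_mul_sin_sq_pos hρ φ).ne')
  rw [phaseDeriv_eq hρ φ, exp_phase_mul_I, jacobian, div_mul_div_comm,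
    div_eq_one_iff_eq (mul_ne_zero h3 (mul_ne_zero two_ne_zero (mul_ne_zero h2 h1)))]
  linear_combination add_inv_mul_eq_of_sub_inv_eq hu hw (exp_arcsin_sub_inv hρ φ)

lemma integrand_eq (hρ : |ρ| < 1) (k p : ℕ) (β φ : ℝ) :
    (-(exp (I * ↑(φ + β)) * wq ρ β (φ + β))) ^ k * (starRingEnd ℂ (wq ρ β (φ + β))) ^ (2 * p) =
      (-exp (β * I)) ^ k * (phaseDeriv ρ φ *
        (kernel ρ k p (exp (phase ρ φ * I)) * jacobian ρ (exp (phase ρ φ * I)))) := by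
  set u := exp (φ * I)
  set w := exp (Real.arcsin (ρ * Real.sin φ) * I)
  have hu : u ≠ 0 := exp_ne_zero _
  have hw : w ≠ 0 := exp_ne_zero _
  have huw : ‖u * w‖ = 1 := by simp only [u, w, norm_mul, norm_exp_ofReal_mul_I, mul_one]
  have hden : u * w * (1 + ρ * (u * w)) ≠ 0 :=
    mul_ne_zero (mul_ne_zero hu hw) (one_add_mul_ne_zero hρ huw.le)
  have hw2 : w⁻¹ ^ 2 = (u * w + ρ) / (u * w * (1 + ρ * (u * w))) :=
    eq_div_of_mul_eq hden (inv_sq_mul_eq_of_sub_inv_eq hu hw (exp_arcsin_sub_inv hρ φ))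
  have hexp : exp (I * ↑(φ + β)) = exp (β * I) * u := by
    rw [← exp_add]; push_cast; ring_nf
  have hconj : starRingEnd ℂ w = w⁻¹ := (inv_eq_conj (norm_exp_ofReal_mul_I _)).symm
  calc (-(exp (I * ↑(φ + β)) * wq ρ β (φ + β))) ^ k * (starRingEnd ℂ (wq ρ β (φ + β))) ^ (2 * p)
      = (-exp (β * I)) ^ k * ((u * w) ^ k * (w⁻¹ ^ 2) ^ p) := by
        rw [wq_eq_exp_arcsin hρ, add_sub_cancel_right, hexp, hconj, ← pow_mul]
        ring
    _ = (-exp (β * I)) ^ k * kernel ρ k p (u * w) := by rw [hw2, kernel]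
    _ = _ := by
        rw [mul_left_comm (phaseDeriv ρ φ : ℂ), phaseDeriv_mul_jacobian hρ, mul_one,
          exp_phase_mul_I]

lemma hasDerivAt_phase (hρ : |ρ| < 1) (φ : ℝ) : HasDerivAt (phase ρ) (phaseDeriv ρ φ) φ := by
  obtain ⟨hlo, hhi⟩ := abs_lt.mp (abs_mul_sin_lt_one hρ φ)
  have h : HasDerivAt (id + Real.arcsin ∘ fun φ => ρ * Real.sin φ)
      (1 + 1 / √(1 - (ρ * Real.sin φ) ^ 2) * (ρ * Real.cos φ)) φ :=
    (hasDerivAt_id φ).add ((Real.hasDerivAt_arcsin hlo.ne' hhi.ne).comp φ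
      ((Real.hasDerivAt_sin φ).const_mul ρ))
  refine h.congr_deriv ?_
  rw [phaseDeriv]
  ring

lemma phaseDeriv_nonneg (hρ : |ρ| < 1) (φ : ℝ) : 0 ≤ phaseDeriv ρ φ := by
  have hc := sqrt_one_sub_mul_sin_sq_pos hρ φ
  have hcos : |ρ * Real.cos φ| ≤ √(1 - (ρ * Real.sin φ) ^ 2) := by
    refine Real.abs_le_sqrt ?_
    have := Real.sin_sq_add_cos_sq φ
    nlinarith [sq_abs ρ, abs_nonneg ρ, sq_nonneg (Real.sin φ)]
  rw [phaseDeriv, ← neg_le_iff_add_nonneg', le_div_iff₀ hc]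
  linarith [neg_abs_le (ρ * Real.cos φ)]

lemma integral_phaseDeriv_smul_comp {E : Type*} [NormedAddCommGroup E] [NormedSpace ℝ E]
    (hρ : |ρ| < 1) (g : ℝ → E) :
    ∫ φ in (0)..(2 * Real.pi), phaseDeriv ρ φ • g (phase ρ φ) =
      ∫ x in (0)..(2 * Real.pi), g x := by
  have hcont : Continuous (phase ρ) :=
    continuous_iff_continuousAt.mpr fun φ => (hasDerivAt_phase hρ φ).continuousAt
  have h := intervalIntegral.integral_deriv_smul_comp_of_deriv_nonneg (g := g) (a := 0)
    (b := 2 * Real.pi) hcont.continuousOn (fun φ _ => hasDerivAt_phase hρ φ)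
    (fun φ _ => phaseDeriv_nonneg hρ φ)
  simpa [phase, Real.sin_two_pi] using h

lemma circleIntegral_kernel_zero (hρ : |ρ| < 1) {k : ℕ} (hk : 1 ≤ k) :
    ∮ v in C(0, 1), (v * I)⁻¹ * (kernel ρ k 0 v * jacobian ρ v) = Real.pi * (-ρ) ^ k := by
  obtain ⟨m, rfl⟩ := Nat.exists_eq_add_of_le' hk
  set G : ℂ → ℂ := fun v => v ^ m * (ρ * v ^ 2 + 2 * v + ρ) / (2 * I * (1 + ρ * v))
  have hG : DifferentiableOn ℂ G (Metric.closedBall 0 1) := fun v hv => by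
    have := one_add_mul_ne_zero hρ (mem_closedBall_zero_iff.mp hv)
    exact (DifferentiableAt.div (by fun_prop) (by fun_prop)
      (by simpa using this)).differentiableWithinAt
  have hc : -(ρ : ℂ) ∈ Metric.ball 0 1 := by simpa using hρ
  have hcG : G (-ρ) = (-ρ) ^ (m + 1) / (2 * I) := by
    have h2I : (2 * I : ℂ) ≠ 0 := mul_ne_zero two_ne_zero I_ne_zero
    have hden : (1 : ℂ) + ρ * -ρ ≠ 0 := one_add_mul_ne_zero hρ (by simpa using hρ.le)
    rw [div_eq_div_iff (mul_ne_zero h2I hden) h2I]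
    ring
  calc ∮ v in C(0, 1), (v * I)⁻¹ * (kernel ρ (m + 1) 0 v * jacobian ρ v)
      = ∮ v in C(0, 1), (v - -ρ)⁻¹ • G v := by
        refine circleIntegral.integral_congr zero_le_one fun v hv => ?_
        obtain ⟨hv0, hvρ, hρv⟩ := ne_zero_of_mem_sphere hρ hv
        simp only [kernel, jacobian, G, smul_eq_mul, pow_zero, mul_one, sub_neg_eq_add]
        field_simp
        ring
    _ = Real.pi * (-ρ) ^ (m + 1) := by
        rw [hG.circleIntegral_sub_inv_smul hc, hcG, smul_eq_mul]
        field_simp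

lemma circleIntegral_kernel_of_pos (hρ : |ρ| < 1) {k p : ℕ} (hp : 0 < p) (hpk : p ≤ k) :
    ∮ v in C(0, 1), (v * I)⁻¹ * (kernel ρ k p v * jacobian ρ v) =
      Real.pi * 0 ^ (k - p) * ρ ^ p := by
  obtain ⟨q, rfl⟩ := Nat.exists_eq_add_of_le' hp
  obtain ⟨m, rfl⟩ := Nat.exists_eq_add_of_le hpk
  set G : ℂ → ℂ := fun v => v ^ m * (v + ρ) ^ q * (ρ * v ^ 2 + 2 * v + ρ) /
    (2 * I * (1 + ρ * v) ^ (q + 2))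
  have hG : DifferentiableOn ℂ G (Metric.closedBall 0 1) := fun v hv => by
    have := one_add_mul_ne_zero hρ (mem_closedBall_zero_iff.mp hv)
    exact (DifferentiableAt.div (by fun_prop) (by fun_prop)
      (by simpa using this)).differentiableWithinAt
  have hc : (0 : ℂ) ∈ Metric.ball 0 1 := Metric.mem_ball_self one_pos
  have hcG : G 0 = 0 ^ m * ρ ^ (q + 1) / (2 * I) := by
    simp only [G]
    ring_nf
  calc ∮ v in C(0, 1), (v * I)⁻¹ * (kernel ρ (q + 1 + m) (q + 1) v * jacobian ρ v)
      = ∮ v in C(0, 1), (v - 0)⁻¹ • G v := by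
        refine circleIntegral.integral_congr zero_le_one fun v hv => ?_
        obtain ⟨hv0, hvρ, hρv⟩ := ne_zero_of_mem_sphere hρ hv
        simp only [kernel, jacobian, G, smul_eq_mul, sub_zero, div_pow, mul_pow]
        field_simp
        ring
    _ = Real.pi * 0 ^ (q + 1 + m - (q + 1)) * ρ ^ (q + 1) := by
        rw [hG.circleIntegral_sub_inv_smul hc, hcG, smul_eq_mul, Nat.add_sub_cancel_left]
        field_simp

lemma integral_eq_circleIntegral (hρ : |ρ| < 1) (k p : ℕ) (β : ℝ) :
    ∫ θ in (0 : ℝ)..(2 * Real.pi),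
        (-(exp (I * θ) * wq ρ β θ)) ^ k * (starRingEnd ℂ (wq ρ β θ)) ^ (2 * p) =
      (-exp (β * I)) ^ k * ∮ v in C(0, 1), (v * I)⁻¹ * (kernel ρ k p v * jacobian ρ v) := by
  have hper : Function.Periodic (fun θ : ℝ =>
      (-(exp (I * θ) * wq ρ β θ)) ^ k * (starRingEnd ℂ (wq ρ β θ)) ^ (2 * p)) (2 * Real.pi) := by
    intro θ
    have hexp : exp (I * ↑(θ + 2 * Real.pi)) = exp (I * θ) := by
      rw [ofReal_add, mul_add, exp_add, ofReal_mul, ofReal_ofNat, mul_comm I (2 * _),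
        exp_two_pi_mul_I, mul_one]
    have hwq : wq ρ β (θ + 2 * Real.pi) = wq ρ β θ := by
      rw [wq, wq, add_sub_right_comm, Real.sin_add_two_pi]
    simp only [hexp, hwq]
  rw [← integral_comp_add_of_periodic hper β]
  simp only [integrand_eq hρ]
  rw [intervalIntegral.integral_const_mul, ← integral_exp_mul_I_eq_circleIntegral,
    ← integral_phaseDeriv_smul_comp hρ
      (fun x => kernel ρ k p (exp (x * I)) * jacobian ρ (exp (x * I)))]
  simp only [real_smul]

end FanBeam

/-- Fix `k ≥ 1` and `z = ρe^{iβ}` with `0 ≤ ρ < 1`. For `0 ≤ p ≤ k` let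
`J_{k,p}(z) = (1/2π) ∫₀^{2π} e^{ikβ₋(z,θ)} e^{2ipα₋(z,θ)} dθ`, written using
`e^{ikβ₋} = (-e^{iθ}w)^k` and `e^{2ipα₋} = (conj w)^{2p}`. Then
`J_{k,0} = (-1)^k J_{k,k} = z^k/2`, `J_{k,p} = 0` for `0 < p < k`, and
`Σ_{p=0}^k (-1)^p J_{k,p} = z^k`. -/
theorem statement14 (k : ℕ) (hk : 1 ≤ k) (ρ β : ℝ) (h0 : 0 ≤ ρ) (h1 : ρ < 1)
    (z : ℂ) (hz : z = (ρ : ℂ) * Complex.exp (Complex.I * β))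
    (J : ℕ → ℂ)
    (hJ : ∀ p : ℕ, J p = (1 / (2 * (Real.pi : ℂ))) *
      ∫ θ in (0:ℝ)..(2 * Real.pi),
        (-(Complex.exp (Complex.I * θ) * wq ρ β θ)) ^ k *
          (starRingEnd ℂ (wq ρ β θ)) ^ (2 * p)) :
    J 0 = z ^ k / 2 ∧
    (-1 : ℂ) ^ k * J k = z ^ k / 2 ∧
    (∀ p : ℕ, 0 < p → p < k → J p = 0) ∧
    ∑ p ∈ Finset.range (k + 1), (-1 : ℂ) ^ p * J p = z ^ k := by
  have hρ : |ρ| < 1 := abs_lt.mpr ⟨by linarith, h1⟩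
  have hπ : (Real.pi : ℂ) ≠ 0 := Complex.ofReal_ne_zero.mpr Real.pi_ne_zero
  have hz' : z = (ρ : ℂ) * Complex.exp (β * Complex.I) := by rw [hz, mul_comm Complex.I]
  have hJ0 : J 0 = z ^ k / 2 := by
    rw [hJ, FanBeam.integral_eq_circleIntegral hρ, FanBeam.circleIntegral_kernel_zero hρ hk,
      hz']
    field_simp
    rw [← mul_pow, neg_mul_neg]
  have hJk : (-1 : ℂ) ^ k * J k = z ^ k / 2 := by
    rw [hJ, FanBeam.integral_eq_circleIntegral hρ,
      FanBeam.circleIntegral_kernel_of_pos hρ hk le_rfl, hz', Nat.sub_self, pow_zero]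
    field_simp
    rw [← mul_pow, ← mul_pow, neg_one_mul, neg_neg]
  have hJmid : ∀ p : ℕ, 0 < p → p < k → J p = 0 := fun p hp hpk => by
    rw [hJ, FanBeam.integral_eq_circleIntegral hρ,
      FanBeam.circleIntegral_kernel_of_pos hρ hp hpk.le, zero_pow (Nat.sub_ne_zero_of_lt hpk)]
    simp
  refine ⟨hJ0, hJk, hJmid, ?_⟩
  rw [Finset.sum_range_succ, Finset.sum_eq_single_of_mem 0 (Finset.mem_range.mpr hk)
    fun p hp hp0 => by rw [hJmid p (Nat.pos_of_ne_zero hp0) (Finset.mem_range.mp hp), mul_zero],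
    pow_zero, one_mul, hJ0, hJk]
  ring
end
end

section
/- Let h be a continuous function on ∂₊SM and let h_ψ(x,θ) := h(β₋(x,θ), α₋(x,θ)) be its extension to the interior of SM, constant along lines; assume h_ψ extends to a C¹ function on SM. Suppose: (a) h ∘ 𝒮_A = h, where 𝒮_A(β,α) = (β + π + 2α, −α) is the antipodal scattering relation (so h_ψ is fiberwise even); (b) the extension A₊h of h to ∂SM by h ∘ 𝒮 on the outgoing boundary is fiberwise holomorphic, i.e. for each boundary point e^{iβ} all Fourier coefficients of negative index in the direction angle θ = β+π+α of θ ↦ A₊h vanish; (c) the fiberwise average (h_ψ)₀(x) := (1/2π)∫₀^{2π} h_ψ(x,θ) dθ satisfies ∂̄ (h_ψ)₀ = 0 on the interior of M. Then h_ψ is fiberwise holomorphic: for every interior point x and every integer n > 0, ∫₀^{2π} h_ψ(x,θ) e^{inθ} dθ = 0. -/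
/-!
Write `u_k(x) = ∫ h_ψ(x,θ) e^{ikθ} dθ`. Since `h_ψ` is constant along lines, `X h_ψ = 0` for
the geodesic vector field `X = e^{iθ} ∂ + e^{-iθ} ∂̄`, and its Fourier modes give
`∂ u_{k+2} + ∂̄ u_k = 0` in the disc. By (b), every `u_k` with `k ≥ 1` vanishes on the circle.
Starting from `∂̄ u_0 = 0`, which is (c), induction gives `∂ u_{2m+2} = 0`: then `u_{2m+2}` is
antiholomorphic and zero on the circle, hence zero on the disc by the maximum principle, so
`∂̄ u_{2m+2} = 0` as well. The odd modes vanish because (a) makes `h_ψ` `π`-periodic in `θ`.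
-/

open MeasureTheory Set

noncomputable section

/-- The fan-beam angle `α₋(z,θ) ∈ (-π/2, π/2)` of the ingoing point of the line through
`z` with direction `e^{iθ}`: for `z = ρe^{iβ}`, `sin α₋ = -ρ sin(θ-β) = Im(z e^{-iθ})`. -/
def alphaM (z : ℂ) (θ : ℝ) : ℝ :=
  Real.arcsin ((z * Complex.exp (-(Complex.I * θ))).im)

/-- The fan-beam angle `β₋(z,θ)` of the ingoing point, chosen so that
`θ = β₋ + π + α₋` exactly. -/
def betaM (z : ℂ) (θ : ℝ) : ℝ := θ - Real.pi - alphaM z θ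

/-- The extension `h_ψ` of a function `h` on `∂₊SM` to the interior of `SM`,
constant along lines: `h_ψ(z,θ) = h(β₋(z,θ), α₋(z,θ))`. -/
def psiExt (h : ℝ → ℝ → ℂ) (z : ℂ) (θ : ℝ) : ℂ := h (betaM z θ) (alphaM z θ)

open Filter Topology

section FanBeam

lemma exp_neg_I_mul_add_pi (θ : ℝ) :
    Complex.exp (-(Complex.I * ((θ + Real.pi : ℝ) : ℂ))) = -Complex.exp (-(Complex.I * θ)) := by
  rw [show -(Complex.I * ((θ + Real.pi : ℝ) : ℂ)) = -(Complex.I * θ) - Real.pi * Complex.I by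
      push_cast; ring,
    Complex.exp_sub, Complex.exp_pi_mul_I, div_neg, div_one]

lemma alphaM_mem_Icc (z : ℂ) (θ : ℝ) : alphaM z θ ∈ Icc (-(Real.pi / 2)) (Real.pi / 2) :=
  Real.arcsin_mem_Icc _

lemma alphaM_add_pi (z : ℂ) (θ : ℝ) : alphaM z (θ + Real.pi) = -alphaM z θ := by
  rw [alphaM, alphaM, exp_neg_I_mul_add_pi, mul_neg, Complex.neg_im, Real.arcsin_neg]

lemma alphaM_add_two_pi (z : ℂ) (θ : ℝ) : alphaM z (θ + 2 * Real.pi) = alphaM z θ := by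
  rw [alphaM, alphaM, show -(Complex.I * ((θ + 2 * Real.pi : ℝ) : ℂ))
      = -(Complex.I * θ) - 2 * Real.pi * Complex.I by push_cast; ring,
    Complex.exp_sub, Complex.exp_two_pi_mul_I, div_one]

lemma alphaM_add_smul_exp (z : ℂ) (t θ : ℝ) :
    alphaM (z + t • Complex.exp (Complex.I * θ)) θ = alphaM z θ := by
  have : (z + t • Complex.exp (Complex.I * θ)) * Complex.exp (-(Complex.I * θ))
      = z * Complex.exp (-(Complex.I * θ)) + t := by
    rw [add_mul, Complex.real_smul, mul_assoc, ← Complex.exp_add, add_neg_cancel,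
      Complex.exp_zero, mul_one]
  rw [alphaM, alphaM, this, Complex.add_im, Complex.ofReal_im, add_zero]

lemma continuous_alphaM (θ : ℝ) : Continuous fun z => alphaM z θ := by
  unfold alphaM
  fun_prop

lemma alphaM_exp_mul_I (β α : ℝ) :
    alphaM (Complex.exp (β * Complex.I)) (β + Real.pi + α) = Real.arcsin (Real.sin α) := by
  have : Complex.exp (β * Complex.I)
      * Complex.exp (-(Complex.I * ((β + Real.pi + α : ℝ) : ℂ)))
      = Complex.exp ((-(α + Real.pi) : ℝ) * Complex.I) := by
    rw [← Complex.exp_add]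
    congr 1
    push_cast
    ring
  rw [alphaM, this, Complex.exp_ofReal_mul_I_im, Real.sin_neg, Real.sin_add_pi, neg_neg]

variable {h : ℝ → ℝ → ℂ}

lemma psiExt_add_pi
    (hSA : ∀ β α : ℝ, α ∈ Icc (-(Real.pi / 2)) (Real.pi / 2) →
      h (β + Real.pi + 2 * α) (-α) = h β α) (z : ℂ) (θ : ℝ) :
    psiExt h z (θ + Real.pi) = psiExt h z θ := by
  rw [psiExt, psiExt, betaM, betaM, alphaM_add_pi,
    ← hSA (θ - Real.pi - alphaM z θ) _ (alphaM_mem_Icc z θ)]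
  ring_nf

lemma psiExt_add_two_pi (hper : ∀ β α : ℝ, h (β + 2 * Real.pi) α = h β α) (z : ℂ) (θ : ℝ) :
    psiExt h z (θ + 2 * Real.pi) = psiExt h z θ := by
  rw [psiExt, psiExt, betaM, betaM, alphaM_add_two_pi, ← hper (θ - Real.pi - alphaM z θ)]
  ring_nf

lemma psiExt_add_smul_exp (z : ℂ) (t θ : ℝ) :
    psiExt h (z + t • Complex.exp (Complex.I * θ)) θ = psiExt h z θ := by
  rw [psiExt, betaM, alphaM_add_smul_exp, psiExt, betaM]

lemma continuous_psiExt
    (hcont : ContinuousOn (Function.uncurry h)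
      ((univ : Set ℝ) ×ˢ Icc (-(Real.pi / 2)) (Real.pi / 2))) (θ : ℝ) :
    Continuous fun z => psiExt h z θ :=
  hcont.comp_continuous (f := fun z => (betaM z θ, alphaM z θ))
    (by unfold betaM; have := continuous_alphaM θ; fun_prop)
    fun z => ⟨mem_univ _, alphaM_mem_Icc z θ⟩

/-- On the boundary, `h_ψ` written in fan-beam coordinates is `A₊h`. -/
lemma psiExt_exp_mul_I (hper : ∀ β α : ℝ, h (β + 2 * Real.pi) α = h β α) (β : ℝ) {α : ℝ}
    (hα : α ∈ Icc (-(Real.pi / 2)) (3 * Real.pi / 2)) :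
    psiExt h (Complex.exp (β * Complex.I)) (β + Real.pi + α)
      = if α ≤ Real.pi / 2 then h β α else h (β + Real.pi + 2 * α) (Real.pi - α) := by
  rw [psiExt, betaM, alphaM_exp_mul_I]
  split_ifs with hα'
  · rw [Real.arcsin_sin hα.1 hα']
    ring_nf
  · rw [← Real.sin_pi_sub, Real.arcsin_sin (by linarith [hα.2]) (by linarith),
      show β + Real.pi + 2 * α = β + Real.pi + α - Real.pi - (Real.pi - α) + 2 * Real.pi by ring,
      hper]

end FanBeam

section Calculus

variable {E F : Type*} [NormedAddCommGroup E] [NormedSpace ℝ E]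
  [NormedAddCommGroup F] [NormedSpace ℝ F]

lemma fderiv_apply_eq_zero_of_eventually_eq {f : E → F} {x v : E}
    (hf : DifferentiableAt ℝ f x) (hconst : ∀ᶠ t in 𝓝 (0 : ℝ), f (x + t • v) = f x) :
    fderiv ℝ f x v = 0 := by
  have hline : HasDerivAt (fun t : ℝ => x + t • v) v 0 := by
    simpa using ((hasDerivAt_id (0 : ℝ)).smul_const v).const_add x
  have hderiv : HasDerivAt (fun t : ℝ => f (x + t • v)) (fderiv ℝ f x v) 0 :=
    (by simpa using hf.hasFDerivAt : HasFDerivAt f (fderiv ℝ f x) (x + (0 : ℝ) • v))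
      |>.comp_hasDerivAt 0 hline
  exact hderiv.unique ((hasDerivAt_const 0 (f x)).congr_of_eventuallyEq hconst)

variable [ProperSpace E]

lemma hasFDerivAt_intervalIntegral_mul {H : E × ℝ → ℂ} (hH : ContDiff ℝ 1 H)
    {w : ℝ → ℂ} (hw : Continuous w) (a b : ℝ) (x₀ : E) :
    HasFDerivAt (fun x => ∫ θ in a..b, H (x, θ) * w θ)
      (∫ θ in a..b, w θ • (fderiv ℝ H (x₀, θ)).comp (ContinuousLinearMap.inl ℝ E ℝ)) x₀ := by
  set F' : E × ℝ → E →L[ℝ] ℂ :=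
    fun p => w p.2 • (fderiv ℝ H p).comp (ContinuousLinearMap.inl ℝ E ℝ)
  have hF' : Continuous F' :=
    (hw.comp continuous_snd).smul ((hH.continuous_fderiv one_ne_zero).clm_comp continuous_const)
  obtain ⟨C, hC⟩ :=
    ((isCompact_closedBall x₀ 1).prod isCompact_uIcc).exists_bound_of_continuousOn
      (hF'.continuousOn (s := Metric.closedBall x₀ 1 ×ˢ uIcc a b))
  have hHθ : ∀ x, Continuous fun θ : ℝ => H (x, θ) * w θ := fun x => by fun_prop
  refine intervalIntegral.hasFDerivAt_integral_of_dominated_of_fderiv_le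
    (F' := fun x θ => F' (x, θ)) (bound := fun _ => C) (Metric.ball_mem_nhds x₀ one_pos)
    (.of_forall fun x => (hHθ x).aestronglyMeasurable) ((hHθ x₀).intervalIntegrable _ _)
    (hF'.comp (continuous_const.prodMk continuous_id)).aestronglyMeasurable
    (.of_forall fun θ hθ x hx => hC _ ⟨Metric.ball_subset_closedBall hx, uIoc_subset_uIcc hθ⟩)
    intervalIntegrable_const (.of_forall fun θ _ x _ => ?_)
  have hHx : HasFDerivAt (fun y : E => H (y, θ)) ((fderiv ℝ H (x, θ)).comp
      (ContinuousLinearMap.inl ℝ E ℝ)) x :=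
    (hH.differentiable one_ne_zero (x, θ)).hasFDerivAt.comp x (hasFDerivAt_prodMk_left x θ)
  simpa [F', mul_comm] using hHx.mul_const (w θ)

end Calculus

/-- `2π` times the Fourier coefficient of index `-k` of `θ ↦ H (z, θ)`. -/
def fiberCoeff (H : ℂ × ℝ → ℂ) (k : ℕ) (z : ℂ) : ℂ :=
  ∫ θ in (0 : ℝ)..(2 * Real.pi), H (z, θ) * Complex.exp (Complex.I * k * θ)

/-- Twice the Wirtinger derivative `∂̄ = ½(∂_x + i∂_y)`. -/
def dbar (f : ℂ → ℂ) (z : ℂ) : ℂ := fderiv ℝ f z 1 + Complex.I * fderiv ℝ f z Complex.I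

/-- Twice the Wirtinger derivative `∂ = ½(∂_x - i∂_y)`. -/
def del (f : ℂ → ℂ) (z : ℂ) : ℂ := fderiv ℝ f z 1 - Complex.I * fderiv ℝ f z Complex.I

section FiberCoeff

variable {H : ℂ × ℝ → ℂ}

lemma hasFDerivAt_fiberCoeff (hH : ContDiff ℝ 1 H) (k : ℕ) (z : ℂ) :
    HasFDerivAt (fiberCoeff H k) (∫ θ in (0 : ℝ)..(2 * Real.pi),
      Complex.exp (Complex.I * k * θ) • (fderiv ℝ H (z, θ)).comp
        (ContinuousLinearMap.inl ℝ ℂ ℝ)) z :=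
  hasFDerivAt_intervalIntegral_mul hH (by fun_prop) _ _ z

lemma differentiable_fiberCoeff (hH : ContDiff ℝ 1 H) (k : ℕ) :
    Differentiable ℝ (fiberCoeff H k) := fun z =>
  (hasFDerivAt_fiberCoeff hH k z).differentiableAt

lemma fderiv_fiberCoeff_apply (hH : ContDiff ℝ 1 H) (k : ℕ) (z v : ℂ) :
    fderiv ℝ (fiberCoeff H k) z v = ∫ θ in (0 : ℝ)..(2 * Real.pi),
      fderiv ℝ H (z, θ) (v, 0) * Complex.exp (Complex.I * k * θ) := by
  have hcont : Continuous fun θ : ℝ => Complex.exp (Complex.I * k * θ) •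
      (fderiv ℝ H (z, θ)).comp (ContinuousLinearMap.inl ℝ ℂ ℝ) :=
    (by fun_prop : Continuous fun θ : ℝ => Complex.exp (Complex.I * k * θ)).smul
      (((hH.continuous_fderiv one_ne_zero).comp
        (continuous_const.prodMk continuous_id)).clm_comp continuous_const)
  rw [(hasFDerivAt_fiberCoeff hH k z).fderiv,
    ContinuousLinearMap.intervalIntegral_apply (hcont.intervalIntegrable _ _)]
  simp [mul_comm]

lemma fderiv_fiberCoeff_one_add_mul_I (hH : ContDiff ℝ 1 H) (k : ℕ) (z c : ℂ) :
    fderiv ℝ (fiberCoeff H k) z 1 + c * fderiv ℝ (fiberCoeff H k) z Complex.I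
      = ∫ θ in (0 : ℝ)..(2 * Real.pi),
        (fderiv ℝ H (z, θ) (1, 0) + c * fderiv ℝ H (z, θ) (Complex.I, 0))
          * Complex.exp (Complex.I * k * θ) := by
  have hD : ∀ v : ℂ, Continuous fun θ : ℝ =>
      fderiv ℝ H (z, θ) (v, 0) * Complex.exp (Complex.I * k * θ) := fun v =>
    (((hH.continuous_fderiv one_ne_zero).comp (by fun_prop)).clm_apply continuous_const).mul
      (by fun_prop)
  rw [fderiv_fiberCoeff_apply hH, fderiv_fiberCoeff_apply hH,
    ← intervalIntegral.integral_const_mul, ← intervalIntegral.integral_add]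
  · exact intervalIntegral.integral_congr fun θ _ => by ring
  exacts [(hD 1).intervalIntegrable _ _, ((hD _).const_smul c).intervalIntegrable _ _]

lemma mul_exp_add_two_add_mul_exp_eq_zero {L : ℂ →L[ℝ] ℂ} {θ : ℝ}
    (hL : L (Complex.exp (Complex.I * θ)) = 0) (k : ℕ) :
    (L 1 - Complex.I * L Complex.I) * Complex.exp (Complex.I * (k + 2 : ℕ) * θ)
      + (L 1 + Complex.I * L Complex.I) * Complex.exp (Complex.I * k * θ) = 0 := by
  set c : ℂ := ((Real.cos θ : ℝ) : ℂ)
  set s : ℂ := ((Real.sin θ : ℝ) : ℂ)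
  have hexp : Complex.exp (Complex.I * θ) = Real.cos θ • (1 : ℂ) + Real.sin θ • Complex.I := by
    rw [mul_comm, Complex.exp_mul_I, Complex.real_smul, Complex.real_smul, mul_one,
      Complex.ofReal_cos, Complex.ofReal_sin]
  have hrel : c * L 1 + s * L Complex.I = 0 := by
    rw [hexp, map_add, map_smul, map_smul, Complex.real_smul, Complex.real_smul] at hL
    exact hL
  have hE2 : Complex.exp (Complex.I * (k + 2 : ℕ) * θ)
      = Complex.exp (Complex.I * k * θ) * ((c + s * Complex.I) * (c + s * Complex.I)) := by
    simp only [c, s]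
    rw [Complex.ofReal_cos, Complex.ofReal_sin, ← Complex.exp_mul_I, ← Complex.exp_add,
      ← Complex.exp_add]
    congr 1
    push_cast
    ring
  have hcs : c ^ 2 + s ^ 2 = 1 := by
    simp only [c, s]
    exact_mod_cast Real.cos_sq_add_sin_sq θ
  -- `(P - iQ) e^{2iθ} + (P + iQ) = 2 e^{iθ} (P cos θ + Q sin θ)`
  linear_combination (L 1 - Complex.I * L Complex.I) * hE2
    + (2 * Complex.exp (Complex.I * k * θ) * (c + s * Complex.I)) * hrel
    + (Complex.exp (Complex.I * k * θ) * (L 1 * s ^ 2 - 2 * L Complex.I * c * s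
      - L Complex.I * s ^ 2 * Complex.I)) * Complex.I_sq
    - (Complex.exp (Complex.I * k * θ) * (L 1 + L Complex.I * Complex.I)) * hcs

/-- The Fourier modes of `X H = 0`, where `X = e^{iθ} ∂ + e^{-iθ} ∂̄` is the geodesic
vector field. -/
lemma del_fiberCoeff_add_two_add_dbar_fiberCoeff (hH : ContDiff ℝ 1 H) {z : ℂ}
    (hline : ∀ θ : ℝ, fderiv ℝ H (z, θ) (Complex.exp (Complex.I * θ), 0) = 0) (k : ℕ) :
    del (fiberCoeff H (k + 2)) z + dbar (fiberCoeff H k) z = 0 := by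
  have hD : ∀ (c : ℂ) (j : ℕ), IntervalIntegrable (fun θ : ℝ =>
      (fderiv ℝ H (z, θ) (1, 0) + c * fderiv ℝ H (z, θ) (Complex.I, 0))
        * Complex.exp (Complex.I * j * θ)) volume 0 (2 * Real.pi) := fun c j =>
    Continuous.intervalIntegrable (by
      have := hH.continuous_fderiv one_ne_zero
      fun_prop) _ _
  rw [del, dbar, sub_eq_add_neg, ← neg_mul, fderiv_fiberCoeff_one_add_mul_I hH,
    fderiv_fiberCoeff_one_add_mul_I hH, ← intervalIntegral.integral_add (hD _ _) (hD _ _)]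
  refine (intervalIntegral.integral_congr fun θ _ => ?_).trans intervalIntegral.integral_zero
  simpa [← sub_eq_add_neg] using mul_exp_add_two_add_mul_exp_eq_zero (L :=
    (fderiv ℝ H (z, θ)).comp (ContinuousLinearMap.inl ℝ ℂ ℝ)) (by simpa using hline θ) k

end FiberCoeff

lemma differentiableAt_conj_of_del_eq_zero {f : ℂ → ℂ} {z : ℂ} (hf : DifferentiableAt ℝ f z)
    (hdel : del f z = 0) : DifferentiableAt ℂ (fun w => (starRingEnd ℂ) (f w)) z := by
  have hconj : HasFDerivAt (fun w => (starRingEnd ℂ) (f w))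
      (Complex.conjCLE.toContinuousLinearMap.comp (fderiv ℝ f z)) z :=
    Complex.conjCLE.toContinuousLinearMap.hasFDerivAt.comp z hf.hasFDerivAt
  rw [differentiableAt_complex_iff_differentiableAt_real, hconj.fderiv]
  refine ⟨hconj.differentiableAt, ?_⟩
  rw [del, sub_eq_zero] at hdel
  simp only [ContinuousLinearMap.coe_comp, ContinuousLinearEquiv.coe_coe, Function.comp_apply,
    Complex.conjCLE_apply, smul_eq_mul, hdel, map_mul, Complex.conj_I]
  linear_combination (starRingEnd ℂ) (fderiv ℝ f z Complex.I) * Complex.I_sq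

/-- The maximum principle, applied to the holomorphic function `conj ∘ f`. -/
lemma eqOn_closure_zero_of_del_eq_zero {f : ℂ → ℂ} {U : Set ℂ} (hU : Bornology.IsBounded U)
    (hf : Differentiable ℝ f) (hdel : ∀ z ∈ U, del f z = 0) (hfr : EqOn f 0 (frontier U)) :
    EqOn f 0 (closure U) := by
  have hconj : DiffContOnCl ℂ (fun w => (starRingEnd ℂ) (f w)) U :=
    ⟨fun z hz => (differentiableAt_conj_of_del_eq_zero (hf z) (hdel z hz)).differentiableWithinAt,
      (Complex.continuous_conj.comp hf.continuous).continuousOn⟩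
  intro z hz
  simpa using Complex.eqOn_closure_of_eqOn_frontier hU hconj (diffContOnCl_const (c := 0))
    (fun w hw => by simp [hfr hw]) hz

lemma dbar_eq_zero_of_eqOn_zero {f : ℂ → ℂ} {U : Set ℂ} (hU : IsOpen U) (hf : EqOn f 0 U)
    {z : ℂ} (hz : z ∈ U) : dbar f z = 0 := by
  have : f =ᶠ[𝓝 z] fun _ => 0 := Filter.eventually_of_mem (hU.mem_nhds hz) hf
  simp [dbar, this.fderiv_eq]

lemma Function.Antiperiodic.intervalIntegral_add_two_mul_eq_zero {E : Type*}
    [NormedAddCommGroup E] [NormedSpace ℝ E] {f : ℝ → E} {c : ℝ} (hf : Function.Antiperiodic f c)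
    (hcont : Continuous f) (a : ℝ) : ∫ x in a..a + 2 * c, f x = 0 := by
  have hshift : ∫ x in a + c..a + 2 * c, f x = -∫ x in a..a + c, f x := by
    rw [← intervalIntegral.integral_neg, show a + 2 * c = a + c + c by ring,
      ← intervalIntegral.integral_comp_add_right]
    exact intervalIntegral.integral_congr fun x _ => hf x
  rw [← intervalIntegral.integral_add_adjacent_intervals (hcont.intervalIntegrable _ (a + c))
    (hcont.intervalIntegrable _ _), hshift, add_neg_cancel]

section FiberCoeffVanishing

variable {H : ℂ × ℝ → ℂ}

lemma fiberCoeff_eq_zero_of_odd {z : ℂ} (hHz : Continuous fun θ : ℝ => H (z, θ))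
    (hpi : ∀ θ : ℝ, H (z, θ + Real.pi) = H (z, θ)) {n : ℕ} (hn : Odd n) : fiberCoeff H n z = 0 := by
  have hanti : Function.Antiperiodic
      (fun θ : ℝ => H (z, θ) * Complex.exp (Complex.I * n * θ)) Real.pi := fun θ => by
    dsimp only
    rw [hpi, Complex.ofReal_add, mul_add, Complex.exp_add,
      show Complex.I * n * Real.pi = n * (Real.pi * Complex.I) by ring, Complex.exp_nat_mul,
      Complex.exp_pi_mul_I, hn.neg_one_pow]
    ring
  simpa [fiberCoeff] using hanti.intervalIntegral_add_two_mul_eq_zero (hHz.mul (by fun_prop)) 0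

lemma fiberCoeff_add_two_eqOn_zero (hH : ContDiff ℝ 1 H)
    (hline : ∀ z ∈ Metric.ball (0 : ℂ) 1, ∀ θ : ℝ,
      fderiv ℝ H (z, θ) (Complex.exp (Complex.I * θ), 0) = 0)
    {k : ℕ} (hbd : ∀ z : ℂ, ‖z‖ = 1 → fiberCoeff H (k + 2) z = 0)
    (hdbar : ∀ z ∈ Metric.ball (0 : ℂ) 1, dbar (fiberCoeff H k) z = 0) :
    EqOn (fiberCoeff H (k + 2)) 0 (Metric.closedBall 0 1) := by
  rw [← closure_ball (0 : ℂ) one_ne_zero]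
  refine eqOn_closure_zero_of_del_eq_zero Metric.isBounded_ball (differentiable_fiberCoeff hH _)
    (fun z hz => ?_) (fun z hz => ?_)
  · simpa [hdbar z hz] using del_fiberCoeff_add_two_add_dbar_fiberCoeff hH (hline z hz) k
  · rw [frontier_ball (0 : ℂ) one_ne_zero, mem_sphere_zero_iff_norm] at hz
    exact hbd z hz

lemma fiberCoeff_two_mul_add_two_eqOn_zero (hH : ContDiff ℝ 1 H)
    (hline : ∀ z ∈ Metric.ball (0 : ℂ) 1, ∀ θ : ℝ,
      fderiv ℝ H (z, θ) (Complex.exp (Complex.I * θ), 0) = 0)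
    (hbd : ∀ k : ℕ, 1 ≤ k → ∀ z : ℂ, ‖z‖ = 1 → fiberCoeff H k z = 0)
    (hdbar : ∀ z ∈ Metric.ball (0 : ℂ) 1, dbar (fiberCoeff H 0) z = 0) (m : ℕ) :
    EqOn (fiberCoeff H (2 * m + 2)) 0 (Metric.closedBall 0 1) := by
  induction m with
  | zero => exact fiberCoeff_add_two_eqOn_zero hH hline (hbd _ (by omega)) hdbar
  | succ m ih =>
    exact fiberCoeff_add_two_eqOn_zero hH hline (hbd _ (by omega)) fun z hz =>
      dbar_eq_zero_of_eqOn_zero Metric.isOpen_ball (ih.mono Metric.ball_subset_closedBall) hz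

end FiberCoeffVanishing

section Extension

variable {h : ℝ → ℝ → ℂ} {H : ℂ × ℝ → ℂ}

lemma fderiv_apply_exp_eq_zero_of_eq_psiExt (hH : ContDiff ℝ 1 H)
    (hHext : ∀ z ∈ Metric.ball (0 : ℂ) 1, ∀ θ : ℝ, H (z, θ) = psiExt h z θ)
    {z : ℂ} (hz : z ∈ Metric.ball (0 : ℂ) 1) (θ : ℝ) :
    fderiv ℝ H (z, θ) (Complex.exp (Complex.I * θ), 0) = 0 := by
  have hnear : ∀ᶠ t in 𝓝 (0 : ℝ), z + t • Complex.exp (Complex.I * θ) ∈ Metric.ball 0 1 :=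
    (Continuous.tendsto' (by fun_prop) 0 z (by simp)).eventually (Metric.isOpen_ball.mem_nhds hz)
  refine fderiv_apply_eq_zero_of_eventually_eq (hH.differentiable one_ne_zero _) ?_
  filter_upwards [hnear] with t ht
  simp only [Prod.smul_mk, Prod.mk_add_mk, smul_zero, add_zero]
  rw [hHext _ ht, hHext _ hz, psiExt_add_smul_exp]

lemma eq_psiExt_of_norm_eq_one
    (hcont : ContinuousOn (Function.uncurry h)
      ((univ : Set ℝ) ×ˢ Icc (-(Real.pi / 2)) (Real.pi / 2)))
    (hH : Continuous H) (hHext : ∀ z ∈ Metric.ball (0 : ℂ) 1, ∀ θ : ℝ, H (z, θ) = psiExt h z θ)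
    {z : ℂ} (hz : ‖z‖ = 1) (θ : ℝ) : H (z, θ) = psiExt h z θ := by
  have hext : EqOn (fun w => H (w, θ)) (fun w => psiExt h w θ) (Metric.ball 0 1) :=
    fun w hw => hHext w hw θ
  refine hext.closure (by fun_prop) (continuous_psiExt hcont θ) ?_
  rw [closure_ball (0 : ℂ) one_ne_zero, mem_closedBall_zero_iff]
  exact hz.le

/-- At a boundary point `e^{iβ}`, the fiber integral of `h_ψ` is, after the substitution
`θ = β + π + α`, the integral of `A₊h` in hypothesis (b). -/
lemma integral_psiExt_mul_exp_eq_zero_of_norm_eq_one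
    (hper : ∀ β α : ℝ, h (β + 2 * Real.pi) α = h β α)
    (hAplus : ∀ β : ℝ, ∀ n : ℕ, 1 ≤ n →
      ∫ α in (-(Real.pi / 2))..(3 * Real.pi / 2),
        (if α ≤ Real.pi / 2 then h β α else h (β + Real.pi + 2 * α) (Real.pi - α)) *
          Complex.exp (Complex.I * n * (β + Real.pi + α)) = 0)
    {z : ℂ} (hz : ‖z‖ = 1) {n : ℕ} (hn : 1 ≤ n) :
    ∫ θ in (0 : ℝ)..(2 * Real.pi), psiExt h z θ * Complex.exp (Complex.I * n * θ) = 0 := by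
  set β := Complex.arg z
  have hzβ : z = Complex.exp (β * Complex.I) := by
    simpa [hz] using (Complex.norm_mul_exp_arg_mul_I z).symm
  set f : ℝ → ℂ := fun θ => psiExt h z θ * Complex.exp (Complex.I * n * θ)
  have hfper : Function.Periodic f (2 * Real.pi) := fun θ => by
    simp only [f]
    rw [psiExt_add_two_pi hper, Complex.ofReal_add, mul_add, Complex.exp_add,
      show Complex.I * n * ((2 * Real.pi : ℝ) : ℂ) = n * (2 * Real.pi * Complex.I) by
        push_cast; ring, Complex.exp_nat_mul_two_pi_mul_I, mul_one]
  have hshift : ∫ θ in (0 : ℝ)..(2 * Real.pi), f θ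
      = ∫ α in (-(Real.pi / 2))..(3 * Real.pi / 2), f (β + Real.pi + α) := by
    rw [intervalIntegral.integral_comp_add_left, ← zero_add (2 * Real.pi),
      hfper.intervalIntegral_add_eq 0 (β + Real.pi + -(Real.pi / 2))]
    congr 1
    ring
  rw [hshift, ← hAplus β n hn]
  refine intervalIntegral.integral_congr fun α hα => ?_
  rw [uIcc_of_le (by linarith [Real.pi_pos])] at hα
  simp only [f]
  rw [hzβ, psiExt_exp_mul_I hper β hα]
  push_cast
  ring_nf

lemma fiberCoeff_eq_zero_of_norm_eq_one
    (hcont : ContinuousOn (Function.uncurry h)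
      ((univ : Set ℝ) ×ˢ Icc (-(Real.pi / 2)) (Real.pi / 2)))
    (hper : ∀ β α : ℝ, h (β + 2 * Real.pi) α = h β α)
    (hH : Continuous H) (hHext : ∀ z ∈ Metric.ball (0 : ℂ) 1, ∀ θ : ℝ, H (z, θ) = psiExt h z θ)
    (hAplus : ∀ β : ℝ, ∀ n : ℕ, 1 ≤ n →
      ∫ α in (-(Real.pi / 2))..(3 * Real.pi / 2),
        (if α ≤ Real.pi / 2 then h β α else h (β + Real.pi + 2 * α) (Real.pi - α)) *
          Complex.exp (Complex.I * n * (β + Real.pi + α)) = 0)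
    {n : ℕ} (hn : 1 ≤ n) {z : ℂ} (hz : ‖z‖ = 1) : fiberCoeff H n z = 0 := by
  rw [fiberCoeff, ← integral_psiExt_mul_exp_eq_zero_of_norm_eq_one hper hAplus hz hn]
  exact intervalIntegral.integral_congr fun θ _ => by
    rw [eq_psiExt_of_norm_eq_one hcont hH hHext hz θ]

lemma dbar_fiberCoeff_zero_eq_zero (hH : ContDiff ℝ 1 H)
    (hHext : ∀ z ∈ Metric.ball (0 : ℂ) 1, ∀ θ : ℝ, H (z, θ) = psiExt h z θ)
    {z : ℂ} (hz : z ∈ Metric.ball (0 : ℂ) 1)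
    (hc : fderiv ℝ (fun w : ℂ =>
          (1 / (2 * (Real.pi : ℂ))) * ∫ θ in (0:ℝ)..(2 * Real.pi), psiExt h w θ) z 1
        + Complex.I * fderiv ℝ (fun w : ℂ =>
          (1 / (2 * (Real.pi : ℂ))) * ∫ θ in (0:ℝ)..(2 * Real.pi), psiExt h w θ) z Complex.I
      = 0) :
    dbar (fiberCoeff H 0) z = 0 := by
  have hloc : (fun w : ℂ => (1 / (2 * (Real.pi : ℂ))) * ∫ θ in (0:ℝ)..(2 * Real.pi), psiExt h w θ)
      =ᶠ[𝓝 z] fun w => (1 / (2 * (Real.pi : ℂ))) * fiberCoeff H 0 w := by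
    filter_upwards [Metric.isOpen_ball.mem_nhds hz] with w hw
    simp [fiberCoeff, hHext w hw]
  rw [hloc.fderiv_eq, fderiv_const_mul (differentiable_fiberCoeff hH 0 z)] at hc
  simp only [FunLike.coe_smul, Pi.smul_apply, smul_eq_mul] at hc
  have hscaled : 1 / (2 * (Real.pi : ℂ)) * dbar (fiberCoeff H 0) z = 0 := by
    rw [dbar]
    linear_combination hc
  exact (mul_eq_zero.mp hscaled).resolve_left (by simp [Real.pi_ne_zero])

end Extension

/-- Let `h` be continuous on `∂₊SM` (as a `2π`-periodic-in-`β` function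
of `(β,α) ∈ ℝ × [-π/2, π/2]`), and suppose its constant-along-lines extension `h_ψ`
extends to a `C¹` function `H` on `SM`. If (a) `h ∘ 𝒮_A = h`; (b) the extension `A₊h`
of `h` to `∂SM` by `h ∘ 𝒮` is fiberwise holomorphic (all Fourier coefficients of
negative index in `θ = β+π+α` vanish); and (c) `∂̄(h_ψ)₀ = 0` on the interior of `M`,
then `h_ψ` is fiberwise holomorphic: `∫₀^{2π} h_ψ(z,θ) e^{inθ} dθ = 0` for all interior
`z` and all `n > 0`. -/
theorem statement17 (h : ℝ → ℝ → ℂ)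
    (hcont : ContinuousOn (Function.uncurry h)
      ((univ : Set ℝ) ×ˢ Icc (-(Real.pi / 2)) (Real.pi / 2)))
    (hper : ∀ β α : ℝ, h (β + 2 * Real.pi) α = h β α)
    (H : ℂ × ℝ → ℂ) (hH : ContDiff ℝ 1 H)
    (hHext : ∀ z ∈ Metric.ball (0 : ℂ) 1, ∀ θ : ℝ, H (z, θ) = psiExt h z θ)
    -- (a) invariance under the antipodal scattering relation
    (hSA : ∀ β α : ℝ, α ∈ Icc (-(Real.pi / 2)) (Real.pi / 2) →
      h (β + Real.pi + 2 * α) (-α) = h β α)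
    -- (b) `A₊h` is fiberwise holomorphic on `∂SM`
    (hAplus : ∀ β : ℝ, ∀ n : ℕ, 1 ≤ n →
      ∫ α in (-(Real.pi / 2))..(3 * Real.pi / 2),
        (if α ≤ Real.pi / 2 then h β α else h (β + Real.pi + 2 * α) (Real.pi - α)) *
          Complex.exp (Complex.I * n * (β + Real.pi + α)) = 0)
    -- (c) the fiberwise average of `h_ψ` is holomorphic on the interior
    (hc : ∀ z ∈ Metric.ball (0 : ℂ) 1,
      fderiv ℝ (fun w : ℂ =>
          (1 / (2 * (Real.pi : ℂ))) * ∫ θ in (0:ℝ)..(2 * Real.pi), psiExt h w θ) z 1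
        + Complex.I * fderiv ℝ (fun w : ℂ =>
          (1 / (2 * (Real.pi : ℂ))) * ∫ θ in (0:ℝ)..(2 * Real.pi), psiExt h w θ) z Complex.I
      = 0) :
    ∀ z ∈ Metric.ball (0 : ℂ) 1, ∀ n : ℕ, 0 < n →
      ∫ θ in (0:ℝ)..(2 * Real.pi),
        psiExt h z θ * Complex.exp (Complex.I * n * θ) = 0 := by
  intro z hz n hn
  have hcoeff : ∫ θ in (0:ℝ)..(2 * Real.pi), psiExt h z θ * Complex.exp (Complex.I * n * θ)
      = fiberCoeff H n z :=
    intervalIntegral.integral_congr fun θ _ => by rw [hHext z hz θ]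
  rw [hcoeff]
  rcases n.even_or_odd' with ⟨m, rfl | rfl⟩
  · obtain ⟨j, rfl⟩ : ∃ j, m = j + 1 := ⟨m - 1, by omega⟩
    exact fiberCoeff_two_mul_add_two_eqOn_zero hH
      (fun w hw => fderiv_apply_exp_eq_zero_of_eq_psiExt hH hHext hw)
      (fun k hk w hw =>
        fiberCoeff_eq_zero_of_norm_eq_one hcont hper hH.continuous hHext hAplus hk hw)
      (fun w hw => dbar_fiberCoeff_zero_eq_zero hH hHext hw (hc w hw)) j
      (Metric.ball_subset_closedBall hz)
  · exact fiberCoeff_eq_zero_of_odd (by fun_prop)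
      (fun θ => by rw [hHext z hz, hHext z hz, psiExt_add_pi hSA]) (odd_two_mul_add_one m)
end
end
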